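/- arXiv:1307.2708 — 11 statements merged into one kernel-verified Lean document; each statement's English description precedes it below -/
import Mathlib

section
/- Let M be a matroid on a finite ground set E with rank r(M) > 0. Then the union of the forming base family of M equals the union of the base family of M, i.e. ⋃ F(M) = ⋃ B(M). -/
open Set

variable {α : Type*}

/-- The rank of a set `X` in a matroid `M`: the largest cardinality of an
independent subset of `X`. -/
noncomputable def Matroid.rSet (M : Matroid α) (X : Set α) : ℕ :=
  sSup {n | ∃ I, M.Indep I ∧ I ⊆ X ∧ I.ncard = n}

/-- The rank of a matroid `M`. -/
noncomputable def Matroid.rank (M : Matroid α) : ℕ :=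
  M.rSet M.E

/-- A secondary base of `M` is an independent set of cardinality `r(M) - 1`. -/
def Matroid.SecondaryBase (M : Matroid α) (A : Set α) : Prop :=
  M.Indep A ∧ A.ncard = M.rank - 1

/-- `K_M(X) = {a ∈ E | r(X ∪ {a}) = r(X) + 1}`. -/
def Matroid.K (M : Matroid α) (X : Set α) : Set α :=
  {a ∈ M.E | M.rSet (X ∪ {a}) = M.rSet X + 1}

/-- The forming base family `F(M) = {K_M(A) | A a secondary base of M}`. -/
def Matroid.FBF (M : Matroid α) : Set (Set α) :=
  {D | ∃ A, M.SecondaryBase A ∧ D = M.K A}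

/-- The forming base family of `M` with respect to a base `B`:
`F_M(B) = {K_M(A) | A a secondary base of M with A ⊆ B}`. -/
def Matroid.FBFwrt (M : Matroid α) (B : Set α) : Set (Set α) :=
  {D | ∃ A, M.SecondaryBase A ∧ A ⊆ B ∧ D = M.K A}

/-- A family `P` of sets is a partition of `S` if `∅ ∉ P`, `⋃ P = S`, and
distinct members of `P` are disjoint. -/
def IsPartitionOn (P : Set (Set α)) (S : Set α) : Prop :=
  ∅ ∉ P ∧ ⋃₀ P = S ∧ ∀ K ∈ P, ∀ L ∈ P, K ≠ L → K ∩ L = ∅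

/-- `M` is a unique expansion matroid if for every base `B` and secondary base `A`,
there is at most one element of `B` completing `A` to a base. -/
def Matroid.UniqueExpansion (M : Matroid α) : Prop :=
  ∀ B, M.IsBase B → ∀ A, M.SecondaryBase A → ∀ e₁ ∈ B, ∀ e₂ ∈ B,
    M.IsBase (A ∪ {e₁}) → M.IsBase (A ∪ {e₂}) → e₁ = e₂

/-- `M` is a union minimal matroid if no proper subfamily of its base family with
the same union is the base family of a matroid on the same ground set. -/
def Matroid.UnionMinimal (M : Matroid α) : Prop :=
  ∀ M₁ : Matroid α, M₁.E = M.E → {B | M₁.IsBase B} ⊆ {B | M.IsBase B} →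
    ⋃₀ {B | M₁.IsBase B} = ⋃₀ {B | M.IsBase B} → {B | M₁.IsBase B} = {B | M.IsBase B}

/-- `M` is an intersection minimal matroid if no proper subfamily of its base family
with the same intersection is the base family of a matroid on the same ground set. -/
def Matroid.InterMinimal (M : Matroid α) : Prop :=
  ∀ M₁ : Matroid α, M₁.E = M.E → {B | M₁.IsBase B} ⊆ {B | M.IsBase B} →
    ⋂₀ {B | M₁.IsBase B} = ⋂₀ {B | M.IsBase B} → {B | M₁.IsBase B} = {B | M.IsBase B}

/-- `M` is a unique exchange matroid if for bases `B₁, B₂` and `x ∈ B₁ - B₂`, there is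
at most one `y ∈ B₂ - B₁` with `(B₁ - {x}) ∪ {y}` a base. -/
def Matroid.UniqueExchange (M : Matroid α) : Prop :=
  ∀ B₁ B₂, M.IsBase B₁ → M.IsBase B₂ → ∀ x ∈ B₁ \ B₂, ∀ y₁ ∈ B₂ \ B₁, ∀ y₂ ∈ B₂ \ B₁,
    M.IsBase ((B₁ \ {x}) ∪ {y₁}) → M.IsBase ((B₁ \ {x}) ∪ {y₂}) → y₁ = y₂

lemma aux_bdd (M : Matroid α) (hE : M.E.Finite) (X : Set α) :
    BddAbove {n | ∃ I, M.Indep I ∧ I ⊆ X ∧ I.ncard = n} :=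
  ⟨M.E.ncard, fun n ⟨I, hI, _, hc⟩ => hc ▸ ncard_le_ncard hI.subset_ground hE⟩

lemma aux_mem (M : Matroid α) (hE : M.E.Finite) (X : Set α) :
    ∃ I, M.Indep I ∧ I ⊆ X ∧ I.ncard = M.rSet X := by
  have h : M.rSet X ∈ {n | ∃ I, M.Indep I ∧ I ⊆ X ∧ I.ncard = n} :=
    Nat.sSup_mem ⟨0, ∅, M.empty_indep, empty_subset _, ncard_empty _⟩ (aux_bdd M hE X)
  exact h

lemma aux_le (M : Matroid α) (hE : M.E.Finite) {X I : Set α} (hI : M.Indep I)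
    (hIX : I ⊆ X) : I.ncard ≤ M.rSet X :=
  le_csSup (aux_bdd M hE X) ⟨I, hI, hIX, rfl⟩

lemma rSet_indep (M : Matroid α) (hE : M.E.Finite) {A : Set α} (hA : M.Indep A) :
    M.rSet A = A.ncard := by
  refine le_antisymm ?_ (aux_le M hE hA subset_rfl)
  obtain ⟨I, hI, hIA, hc⟩ := aux_mem M hE A
  exact hc ▸ ncard_le_ncard hIA (hE.subset hA.subset_ground)

lemma rank_eq_ncard (M : Matroid α) (hE : M.E.Finite) {B : Set α} (hB : M.IsBase B) :
    M.rank = B.ncard := by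
  refine le_antisymm ?_ (aux_le M hE hB.indep hB.subset_ground)
  obtain ⟨I, hI, _, hc⟩ := aux_mem M hE M.E
  obtain ⟨B', hB', hIB'⟩ := hI.exists_isBase_superset
  calc M.rank = I.ncard := hc.symm
    _ ≤ B'.ncard := ncard_le_ncard hIB' (hE.subset hB'.subset_ground)
    _ = B.ncard := hB'.ncard_eq_ncard_of_isBase hB

lemma base_of_ncard (M : Matroid α) (hE : M.E.Finite) {I : Set α} (hI : M.Indep I)
    (hc : I.ncard = M.rank) : M.IsBase I := by
  obtain ⟨B, hB, hIB⟩ := hI.exists_isBase_superset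
  have : I = B := eq_of_subset_of_ncard_le hIB
    (by rw [hc, rank_eq_ncard M hE hB]) (hE.subset hB.subset_ground)
  exact this ▸ hB

theorem stmt_1 (M : Matroid α) (hE : M.E.Finite) (hr : 0 < M.rank) :
    ⋃₀ M.FBF = ⋃₀ {B | M.IsBase B} := by
  ext a
  simp only [mem_sUnion, Matroid.FBF, mem_setOf_eq]
  constructor
  · rintro ⟨D, ⟨A, ⟨hAi, hAc⟩, rfl⟩, haE, hKa⟩
    rw [rSet_indep M hE hAi, hAc] at hKa
    have hKa' : M.rSet (A ∪ {a}) = M.rank := by omega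
    obtain ⟨I, hI, hIA, hc⟩ := aux_mem M hE (A ∪ {a})
    have haI : a ∈ I := by
      by_contra h
      have : I ⊆ A := fun x hx => (hIA hx).resolve_right (by rintro rfl; exact h hx)
      have := ncard_le_ncard this (hE.subset hAi.subset_ground)
      omega
    exact ⟨I, base_of_ncard M hE hI (hc.trans hKa'), haI⟩
  · rintro ⟨B, hB, haB⟩
    have hBi := hB.indep
    have hBE := hE.subset hB.subset_ground
    set A := B \ {a} with hA
    have hAi : M.Indep A := hBi.subset diff_subset
    have hAc : A.ncard = M.rank - 1 := by
      rw [hA, ncard_diff_singleton_of_mem haB, rank_eq_ncard M hE hB]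
    have hAU : A ∪ {a} = B := diff_union_of_subset (singleton_subset_iff.2 haB)
    refine ⟨M.K A, ⟨A, ⟨hAi, hAc⟩, rfl⟩, hB.subset_ground haB, ?_⟩
    rw [hAU, rSet_indep M hE hAi, rSet_indep M hE hBi, hAc,
      ← rank_eq_ncard M hE hB]
    omega
end

section
/- Let M be a matroid on a finite ground set E with rank r(M) > 0, and let B be a base of M. Then the union of the forming base family of M with respect to B equals the union of the base family of M, i.e. ⋃ F_M(B) = ⋃ B(M). -/
open Set

variable {α : Type*}

namespace Matroid

variable {M : Matroid α} {X I A B : Set α}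

lemma rSet_bdd (M : Matroid α) (hE : M.E.Finite) (X : Set α) :
    BddAbove {n | ∃ I, M.Indep I ∧ I ⊆ X ∧ I.ncard = n} :=
  ⟨M.E.ncard, fun _ ⟨I, hI, _, hc⟩ => hc ▸ Set.ncard_le_ncard hI.subset_ground hE⟩

lemma le_rSet (hE : M.E.Finite) (hI : M.Indep I) (hIX : I ⊆ X) : I.ncard ≤ M.rSet X :=
  le_csSup (rSet_bdd M hE X) ⟨I, hI, hIX, rfl⟩

lemma exists_rSet (M : Matroid α) (hE : M.E.Finite) (X : Set α) :
    ∃ I, M.Indep I ∧ I ⊆ X ∧ I.ncard = M.rSet X := by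
  have h0 : (0 : ℕ) ∈ {n | ∃ I, M.Indep I ∧ I ⊆ X ∧ I.ncard = n} :=
    ⟨∅, M.empty_indep, Set.empty_subset X, Set.ncard_empty α⟩
  exact Nat.sSup_mem ⟨0, h0⟩ (rSet_bdd M hE X)

lemma rSet_indep (hE : M.E.Finite) (hA : M.Indep A) : M.rSet A = A.ncard := by
  refine le_antisymm (csSup_le ⟨0, ∅, M.empty_indep, Set.empty_subset A, Set.ncard_empty α⟩ ?_)
    (le_rSet hE hA subset_rfl)
  rintro n ⟨I, _, hIA, rfl⟩
  exact Set.ncard_le_ncard hIA (hE.subset hA.subset_ground)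

lemma base_ncard (hE : M.E.Finite) (hB : M.IsBase B) : B.ncard = M.rank := by
  refine le_antisymm (le_rSet hE hB.indep hB.subset_ground) ?_
  obtain ⟨I, hI, _, hIc⟩ := M.exists_rSet hE M.E
  obtain ⟨B', hB', hIB'⟩ := hI.exists_isBase_superset
  rw [Matroid.rank, ← hIc]
  calc I.ncard ≤ B'.ncard := Set.ncard_le_ncard hIB' (hE.subset hB'.subset_ground)
    _ = B.ncard := hB'.ncard_eq_ncard_of_isBase hB

lemma base_of_indep_ncard (hE : M.E.Finite) (hI : M.Indep I) (h : I.ncard = M.rank) :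
    M.IsBase I := by
  obtain ⟨B', hB', hIB'⟩ := hI.exists_isBase_superset
  have : I = B' := Set.eq_of_subset_of_ncard_le hIB'
    (by rw [base_ncard hE hB', h]) (hE.subset hB'.subset_ground)
  rwa [this]

end Matroid

theorem stmt_3 (M : Matroid α) (hE : M.E.Finite) (hr : 0 < M.rank)
    (B : Set α) (hB : M.IsBase B) :
    ⋃₀ M.FBFwrt B = ⋃₀ {B' | M.IsBase B'} := by
  ext a
  simp only [Set.mem_sUnion, Matroid.FBFwrt, Set.mem_setOf_eq]
  constructor
  · rintro ⟨D, ⟨A, ⟨hAi, hAc⟩, hAB, rfl⟩, haE, hK⟩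
    have hAfin : A.Finite := hE.subset hAi.subset_ground
    rw [Matroid.rSet_indep hE hAi, hAc] at hK
    have hK' : M.rSet (A ∪ {a}) = M.rank := by omega
    obtain ⟨I, hI, hIsub, hIc⟩ := M.exists_rSet hE (A ∪ {a})
    rw [hK'] at hIc
    have hIbase := Matroid.base_of_indep_ncard hE hI hIc
    refine ⟨I, hIbase, ?_⟩
    by_contra haI
    have : I ⊆ A := fun x hx => (hIsub hx).elim id (fun h => absurd (h ▸ hx) (by simpa [h] using haI))
    have := Set.ncard_le_ncard this hAfin
    omega
  · rintro ⟨B', hB', haB'⟩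
    have hIa : M.Indep {a} := hB'.indep.subset (Set.singleton_subset_iff.2 haB')
    obtain ⟨B'', hB'', hsub, hsub2⟩ := hIa.exists_isBase_subset_union_isBase hB
    have haB'' : a ∈ B'' := hsub rfl
    have hfin : B''.Finite := hE.subset hB''.subset_ground
    have hcard : B''.ncard = M.rank := Matroid.base_ncard hE hB''
    have hAi : M.Indep (B'' \ {a}) := hB''.indep.subset Set.diff_subset
    have hAc : (B'' \ {a}).ncard = M.rank - 1 := by
      rw [Set.ncard_diff_singleton_of_mem haB'', hcard]
    have hunion : (B'' \ {a}) ∪ {a} = B'' := by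
      rw [Set.diff_union_self, Set.union_eq_self_of_subset_right
        (Set.singleton_subset_iff.2 haB'')]
    refine ⟨M.K (B'' \ {a}), ⟨B'' \ {a}, ⟨hAi, hAc⟩, ?_, rfl⟩,
      hB''.subset_ground haB'', ?_⟩
    · rintro x ⟨hx1, hx2⟩
      exact (hsub2 hx1).elim (fun h => absurd h hx2) id
    · rw [hunion, Matroid.rSet_indep hE hB''.indep, Matroid.rSet_indep hE hAi, hcard, hAc]
      omega
end

section
/- Let M be a matroid on a finite ground set E with rank r(M) > 0. Then the forming base family F(M) is a partition of ⋃ B(M) (i.e. ∅ ∉ F(M), ⋃ F(M) = ⋃ B(M), and distinct members of F(M) are disjoint) if and only if M is a unique expansion matroid. -/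
open Set

variable {α : Type*}

section Aux

variable {M : Matroid α}

lemma rSet_le_upper (hE : M.E.Finite) {X : Set α} {I : Set α} (hI : M.Indep I)
    (hIX : I ⊆ X) : I.ncard ≤ M.rSet X := by
  apply le_csSup
  · refine ⟨M.E.ncard, ?_⟩
    rintro n ⟨J, hJ, -, rfl⟩
    exact Set.ncard_le_ncard hJ.subset_ground hE
  · exact ⟨I, hI, hIX, rfl⟩

lemma rSet_spec (hE : M.E.Finite) (X : Set α) :
    ∃ I, M.Indep I ∧ I ⊆ X ∧ I.ncard = M.rSet X := by
  have h : M.rSet X ∈ {n | ∃ I, M.Indep I ∧ I ⊆ X ∧ I.ncard = n} := by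
    apply Nat.sSup_mem
    · exact ⟨0, ∅, M.empty_indep, empty_subset _, Set.ncard_empty α⟩
    · refine ⟨M.E.ncard, ?_⟩
      rintro n ⟨J, hJ, -, rfl⟩
      exact Set.ncard_le_ncard hJ.subset_ground hE
  exact h

lemma indep_finite (hE : M.E.Finite) {I : Set α} (hI : M.Indep I) : I.Finite :=
  hE.subset hI.subset_ground

lemma rSet_indep_s4 (hE : M.E.Finite) {I : Set α} (hI : M.Indep I) :
    M.rSet I = I.ncard := by
  refine le_antisymm ?_ (rSet_le_upper hE hI subset_rfl)
  obtain ⟨J, hJ, hJI, hc⟩ := rSet_spec hE I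
  rw [← hc]
  exact Set.ncard_le_ncard hJI (indep_finite hE hI)

lemma base_ncard (hE : M.E.Finite) {B : Set α} (hB : M.IsBase B) :
    B.ncard = M.rank := by
  refine le_antisymm (rSet_le_upper hE hB.indep hB.subset_ground) ?_
  obtain ⟨I, hI, -, hc⟩ := rSet_spec hE M.E
  obtain ⟨B', hB', hIB'⟩ := hI.exists_isBase_superset
  have h1 : B'.ncard = B.ncard := by
    rw [Set.ncard_def, Set.ncard_def, hB'.encard_eq_encard_of_isBase hB]
  calc M.rank = I.ncard := hc.symm
    _ ≤ B'.ncard := Set.ncard_le_ncard hIB' (indep_finite hE hB'.indep)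
    _ = B.ncard := h1

lemma base_of_indep_ncard (hE : M.E.Finite) {I : Set α} (hI : M.Indep I)
    (hc : I.ncard = M.rank) : M.IsBase I := by
  obtain ⟨B, hB, hIB⟩ := hI.exists_isBase_superset
  have : I = B := Set.eq_of_subset_of_ncard_le hIB
    (by rw [base_ncard hE hB, hc]) (indep_finite hE hB.indep)
  rwa [this]

lemma secondary_rank_eq (hr : 0 < M.rank) {A : Set α} (hA : M.SecondaryBase A) :
    A.ncard + 1 = M.rank := by
  have := hA.2; omega

lemma mem_K_iff (hE : M.E.Finite) (hr : 0 < M.rank) {A : Set α}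
    (hA : M.SecondaryBase A) {a : α} : a ∈ M.K A ↔ M.IsBase (A ∪ {a}) := by
  have hAfin : A.Finite := indep_finite hE hA.1
  have hAr : M.rSet A = A.ncard := rSet_indep_s4 hE hA.1
  rw [Set.union_singleton]
  constructor
  · rintro ⟨haE, hra⟩
    rw [Set.union_singleton, hAr] at hra
    obtain ⟨I, hI, hIX, hc⟩ := rSet_spec hE (insert a A)
    rw [hra, secondary_rank_eq hr hA] at hc
    have hIb : M.IsBase I := base_of_indep_ncard hE hI hc
    have hle : (insert a A).ncard ≤ I.ncard := by
      rw [hc, ← secondary_rank_eq hr hA]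
      exact Set.ncard_insert_le a A
    have : I = insert a A :=
      Set.eq_of_subset_of_ncard_le hIX hle (hAfin.insert a)
    rwa [this] at hIb
  · intro hb
    have haA : a ∉ A := by
      intro haA
      rw [Set.insert_eq_of_mem haA] at hb
      have := base_ncard hE hb
      rw [hA.2] at this; omega
    have haE : a ∈ M.E := hb.subset_ground (mem_insert a A)
    refine ⟨haE, ?_⟩
    rw [Set.union_singleton, hAr, rSet_indep_s4 hE hb.indep,
      Set.ncard_insert_of_notMem haA hAfin]

lemma K_eq_diff_closure (hE : M.E.Finite) (hr : 0 < M.rank) {A : Set α}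
    (hA : M.SecondaryBase A) : M.K A = M.E \ M.closure A := by
  ext a
  rw [mem_K_iff hE hr hA, Set.union_singleton]
  constructor
  · intro hb
    have haA : a ∉ A := by
      intro haA
      rw [Set.insert_eq_of_mem haA] at hb
      have := base_ncard hE hb
      rw [hA.2] at this; omega
    exact (hA.1.insert_indep_iff_of_notMem haA).mp hb.indep
  · intro ha
    have haA : a ∉ A := fun h => ha.2 (M.subset_closure A hA.1.subset_ground h)
    have hi : M.Indep (insert a A) :=
      (hA.1.insert_indep_iff_of_notMem haA).mpr ha
    exact base_of_indep_ncard hE hi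
      (by rw [Set.ncard_insert_of_notMem haA (indep_finite hE hA.1)]
          exact secondary_rank_eq hr hA)

lemma exists_base_union (hE : M.E.Finite) (hr : 0 < M.rank) {A : Set α}
    (hA : M.SecondaryBase A) : ∃ a, M.IsBase (A ∪ {a}) := by
  obtain ⟨B, hB, hAB⟩ := hA.1.exists_isBase_superset
  have hne : ¬ B ⊆ A := by
    intro h
    have heq : A = B := hAB.antisymm h
    have hbn := base_ncard hE hB
    rw [← heq, hA.2] at hbn
    omega
  obtain ⟨a, haB, haA⟩ := not_subset.mp hne
  refine ⟨a, ?_⟩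
  rw [Set.union_singleton]
  exact base_of_indep_ncard hE (hB.indep.subset (insert_subset haB hAB))
    (by rw [Set.ncard_insert_of_notMem haA (indep_finite hE hA.1)]
        exact secondary_rank_eq hr hA)

lemma x_not_mem (hE : M.E.Finite) (hr : 0 < M.rank) {A : Set α}
    (hA : M.SecondaryBase A) {x : α} (hb : M.IsBase (A ∪ {x})) : x ∉ A := by
  intro hxA
  rw [Set.union_singleton, Set.insert_eq_of_mem hxA] at hb
  have := base_ncard hE hb
  rw [hA.2] at this; omega

/-- Under unique expansion, a common element of two `K`-sets forces the closures
to be nested. -/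
lemma closure_subset_of_inter (hE : M.E.Finite) (hr : 0 < M.rank)
    (hUE : M.UniqueExpansion) {A₁ A₂ : Set α} (hA₁ : M.SecondaryBase A₁)
    (hA₂ : M.SecondaryBase A₂) {x : α} (hx₁ : x ∈ M.K A₁) (hx₂ : x ∈ M.K A₂) :
    M.closure A₁ ⊆ M.closure A₂ := by
  have hb₁ : M.IsBase (A₁ ∪ {x}) := (mem_K_iff hE hr hA₁).mp hx₁
  have hb₂ : M.IsBase (A₂ ∪ {x}) := (mem_K_iff hE hr hA₂).mp hx₂
  have hxA₁ : x ∉ A₁ := x_not_mem hE hr hA₁ hb₁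
  have hsub : A₁ ⊆ M.closure A₂ := by
    intro a haA₁
    by_contra hacl
    have haE : a ∈ M.E := hA₁.1.subset_ground haA₁
    have haA₂ : a ∉ A₂ := fun h => hacl (M.subset_closure A₂ hA₂.1.subset_ground h)
    have hi : M.Indep (insert a A₂) :=
      (hA₂.1.insert_indep_iff_of_notMem haA₂).mpr ⟨haE, hacl⟩
    have hba : M.IsBase (A₂ ∪ {a}) := by
      rw [Set.union_singleton]
      exact base_of_indep_ncard hE hi
        (by rw [Set.ncard_insert_of_notMem haA₂ (indep_finite hE hA₂.1)]
            exact secondary_rank_eq hr hA₂)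
    have hax : a = x := hUE (A₁ ∪ {x}) hb₁ A₂ hA₂ a
      (Or.inl haA₁) x (Or.inr rfl) hba hb₂
    exact hxA₁ (hax ▸ haA₁)
  calc M.closure A₁ ⊆ M.closure (M.closure A₂) := M.closure_subset_closure hsub
    _ = M.closure A₂ := M.closure_closure A₂

end Aux

theorem stmt_4 (M : Matroid α) (hE : M.E.Finite) (hr : 0 < M.rank) :
    IsPartitionOn M.FBF (⋃₀ {B | M.IsBase B}) ↔ M.UniqueExpansion := by
  constructor
  · rintro ⟨-, -, hdis⟩ B hB A hA e₁ he₁ e₂ he₂ hb₁ hb₂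
    by_contra hne
    have hBfin : B.Finite := indep_finite hE hB.indep
    have hA₁ : M.SecondaryBase (B \ {e₁}) := by
      refine ⟨hB.indep.subset diff_subset, ?_⟩
      rw [Set.ncard_diff_singleton_of_mem he₁, base_ncard hE hB]
    have hBeq : (B \ {e₁}) ∪ {e₁} = B := by
      rw [Set.union_singleton, Set.insert_diff_singleton, Set.insert_eq_of_mem he₁]
    have he₁K : e₁ ∈ M.K (B \ {e₁}) := by
      rw [mem_K_iff hE hr hA₁, hBeq]; exact hB
    have he₁KA : e₁ ∈ M.K A := (mem_K_iff hE hr hA).mpr hb₁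
    have hKA : M.K A ∈ M.FBF := ⟨A, hA, rfl⟩
    have hKA₁ : M.K (B \ {e₁}) ∈ M.FBF := ⟨B \ {e₁}, hA₁, rfl⟩
    by_cases heq : M.K A = M.K (B \ {e₁})
    · have he₂K : e₂ ∈ M.K (B \ {e₁}) := by
        rw [← heq]; exact (mem_K_iff hE hr hA).mpr hb₂
      have := x_not_mem hE hr hA₁ ((mem_K_iff hE hr hA₁).mp he₂K)
      exact this ⟨he₂, fun h => hne (Eq.symm (by simpa using h))⟩
    · have := hdis _ hKA _ hKA₁ heq
      have : e₁ ∈ M.K A ∩ M.K (B \ {e₁}) := ⟨he₁KA, he₁K⟩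
      rw [hdis _ hKA _ hKA₁ heq] at this
      exact this
  · intro hUE
    refine ⟨?_, ?_, ?_⟩
    · rintro ⟨A, hA, hKA⟩
      obtain ⟨a, ha⟩ := exists_base_union hE hr hA
      have : a ∈ M.K A := (mem_K_iff hE hr hA).mpr ha
      rw [← hKA] at this
      exact this
    · ext a
      simp only [mem_sUnion, Matroid.FBF, mem_setOf_eq]
      constructor
      · rintro ⟨K, ⟨A, hA, rfl⟩, haK⟩
        exact ⟨A ∪ {a}, (mem_K_iff hE hr hA).mp haK, Or.inr rfl⟩
      · rintro ⟨B, hB, haB⟩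
        have hBfin : B.Finite := indep_finite hE hB.indep
        have hA : M.SecondaryBase (B \ {a}) := by
          refine ⟨hB.indep.subset diff_subset, ?_⟩
          rw [Set.ncard_diff_singleton_of_mem haB, base_ncard hE hB]
        refine ⟨M.K (B \ {a}), ⟨B \ {a}, hA, rfl⟩, ?_⟩
        rw [mem_K_iff hE hr hA, Set.union_singleton, Set.insert_diff_singleton,
          Set.insert_eq_of_mem haB]
        exact hB
    · rintro K ⟨A₁, hA₁, rfl⟩ L ⟨A₂, hA₂, rfl⟩ hne
      by_contra hint
      obtain ⟨x, hx₁, hx₂⟩ := Set.nonempty_iff_ne_empty.mpr hint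
      have h12 := closure_subset_of_inter hE hr hUE hA₁ hA₂ hx₁ hx₂
      have h21 := closure_subset_of_inter hE hr hUE hA₂ hA₁ hx₂ hx₁
      have : M.closure A₁ = M.closure A₂ := h12.antisymm h21
      exact hne (by rw [K_eq_diff_closure hE hr hA₁, K_eq_diff_closure hE hr hA₂, this])
end

section
/- Let M be a matroid on a finite ground set E with rank r(M) > 0. Then the forming base family F(M) has cardinality equal to the rank of M, i.e. |F(M)| = r(M), if and only if M is a unique expansion matroid. -/
open Set

variable {α : Type*}

namespace Matroid

variable {M : Matroid α} {A A₁ A₂ B I X : Set α} {e : α}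

lemma rSet_eq_ncard (hE : M.E.Finite) (hI : M.IsBasis' I X) : M.rSet X = I.ncard := by
  have hub : ∀ n ∈ {n | ∃ J, M.Indep J ∧ J ⊆ X ∧ J.ncard = n}, n ≤ I.ncard := by
    rintro n ⟨J, hJ, hJX, rfl⟩
    obtain ⟨J', hJ', hJJ'⟩ := hJ.subset_isBasis'_of_subset hJX
    have hcard : J'.encard = I.encard := hJ'.encard_eq_encard hI
    have hJ'fin : J'.Finite := hE.subset hJ'.indep.subset_ground
    calc J.ncard ≤ J'.ncard := ncard_le_ncard hJJ' hJ'fin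
    _ = I.ncard := by rw [ncard_def, hcard, ← ncard_def]
  refine le_antisymm (csSup_le ⟨I.ncard, I, hI.indep, hI.subset, rfl⟩ hub) ?_
  exact le_csSup ⟨I.ncard, hub⟩ ⟨I, hI.indep, hI.subset, rfl⟩

lemma rank_eq_ncard_base (hE : M.E.Finite) (hB : M.IsBase B) : M.rank = B.ncard :=
  rSet_eq_ncard hE hB.isBasis_ground.isBasis'

lemma K_eq (hE : M.E.Finite) (hA : M.Indep A) : M.K A = M.E \ M.closure A := by
  have hAfin : A.Finite := hE.subset hA.subset_ground
  have hAA : A ⊆ M.closure A := M.subset_closure A hA.subset_ground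
  have hrA : M.rSet A = A.ncard := rSet_eq_ncard hE hA.isBasis_self.isBasis'
  ext a
  simp only [Matroid.K, mem_setOf_eq, mem_diff, hrA]
  refine and_congr_right fun haE => ⟨fun h hcl => ?_, fun h => ?_⟩
  · have hb : M.IsBasis A (A ∪ {a}) :=
      hA.isBasis_of_subset_of_subset_closure subset_union_left
        (union_subset hAA (by simpa))
    rw [rSet_eq_ncard hE hb.isBasis'] at h
    omega
  · have haA : a ∉ A := fun hmem => h (hAA hmem)
    have hins : M.Indep (insert a A) :=
      ((hA.notMem_closure_iff_of_notMem haA haE).mp h)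
    have hb : M.IsBasis' (insert a A) (A ∪ {a}) := by
      rw [union_singleton]; exact hins.isBasis_self.isBasis'
    rw [rSet_eq_ncard hE hb, ncard_insert_of_notMem haA hAfin]

lemma indep_base_of_ncard (hE : M.E.Finite) (hI : M.Indep I) (hcard : I.ncard = M.rank) :
    M.IsBase I := by
  obtain ⟨B', hB', hIB'⟩ := hI.exists_isBase_superset
  have hfin : B'.Finite := hE.subset hB'.subset_ground
  have : I = B' :=
    eq_of_subset_of_ncard_le hIB' (by rw [← rank_eq_ncard_base hE hB', hcard]) hfin
  rwa [this]

lemma SecondaryBase.base_insert_iff (hE : M.E.Finite) (hr : 0 < M.rank)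
    (hA : M.SecondaryBase A) (he : e ∈ M.E) :
    M.IsBase (A ∪ {e}) ↔ e ∉ M.closure A := by
  rw [union_singleton]
  constructor
  · intro hB
    have heA : e ∉ A := by
      intro heA
      rw [insert_eq_self.2 heA] at hB
      have h1 := rank_eq_ncard_base hE hB
      have h2 := hA.2
      omega
    exact (hA.1.notMem_closure_iff_of_notMem heA he).mpr hB.indep
  · intro h
    have heA : e ∉ A := fun hmem => h (M.subset_closure A hA.1.subset_ground hmem)
    have hins : M.Indep (insert e A) := (hA.1.notMem_closure_iff_of_notMem heA he).mp h
    refine indep_base_of_ncard hE hins ?_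
    rw [ncard_insert_of_notMem heA (hE.subset hA.1.subset_ground), hA.2]
    omega

lemma SecondaryBase.not_base_subset_closure (hE : M.E.Finite) (hr : 0 < M.rank)
    (hA : M.SecondaryBase A) (hB : M.IsBase B) : ¬ B ⊆ M.closure A := by
  intro h
  have h1 : M.E ⊆ M.closure A := by
    rw [← hB.closure_eq]
    simpa using M.closure_subset_closure_of_subset_closure h
  have hAB : M.IsBase A :=
    hA.1.isBase_of_ground_subset_closure h1
  have := rank_eq_ncard_base hE hAB
  have := hA.2
  omega

lemma SecondaryBase.closure_eq_of_subset_closure (hE : M.E.Finite) (hr : 0 < M.rank)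
    (hA₁ : M.SecondaryBase A₁) (hA₂ : M.SecondaryBase A₂) (h : A₁ ⊆ M.closure A₂) :
    M.closure A₁ = M.closure A₂ := by
  refine le_antisymm (M.closure_subset_closure_of_subset_closure h) ?_
  by_contra hcon
  obtain ⟨x, hx2, hx1⟩ := not_subset.mp hcon
  have hxE : x ∈ M.E := mem_ground_of_mem_closure hx2
  have hxA₁ : x ∉ A₁ := fun hmem => hx1 (M.subset_closure A₁ hA₁.1.subset_ground hmem)
  have hbase : M.IsBase (A₁ ∪ {x}) := (hA₁.base_insert_iff hE hr hxE).mpr hx1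
  refine hA₂.not_base_subset_closure hE hr hbase ?_
  exact union_subset h (by simpa)

lemma IsBase.secondaryBase_diff (hE : M.E.Finite) (hB : M.IsBase B) (he : e ∈ B) :
    M.SecondaryBase (B \ {e}) :=
  ⟨hB.indep.diff _, by
    rw [ncard_diff_singleton_of_mem he,
      rank_eq_ncard_base hE hB]⟩

lemma IsBase.mem_K_diff (hE : M.E.Finite) (hB : M.IsBase B) (he : e ∈ B) :
    e ∈ M.K (B \ {e}) := by
  rw [K_eq hE (hB.indep.diff _)]
  exact ⟨hB.subset_ground he, hB.indep.notMem_closure_diff_of_mem he⟩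

lemma IsBase.not_mem_K_diff {e' : α} (hE : M.E.Finite) (hB : M.IsBase B) (he' : e' ∈ B)
    (hne : e' ≠ e) : e' ∉ M.K (B \ {e}) := by
  rw [K_eq hE (hB.indep.diff _)]
  rintro ⟨-, h⟩
  exact h (M.subset_closure _ ((diff_subset).trans hB.subset_ground) ⟨he', hne⟩)

lemma IsBase.injOn_K_diff (hE : M.E.Finite) (hB : M.IsBase B) :
    Set.InjOn (fun b => M.K (B \ {b})) B := by
  intro b hb b' hb' hbb'
  by_contra hne
  have h1 := hB.mem_K_diff hE hb
  rw [show M.K (B \ {b}) = M.K (B \ {b'}) from hbb'] at h1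
  exact hB.not_mem_K_diff hE hb hne h1

lemma fbf_finite (hE : M.E.Finite) : M.FBF.Finite := by
  refine hE.finite_subsets.subset ?_
  rintro D ⟨A, -, rfl⟩
  exact fun a ha => ha.1

lemma IsBase.image_K_subset_fbf (hE : M.E.Finite) (hB : M.IsBase B) :
    (fun b => M.K (B \ {b})) '' B ⊆ M.FBF := by
  rintro D ⟨b, hb, rfl⟩
  exact ⟨B \ {b}, hB.secondaryBase_diff hE hb, rfl⟩

end Matroid


theorem stmt_6 (M : Matroid α) (hE : M.E.Finite) (hr : 0 < M.rank) :
    M.FBF.ncard = M.rank ↔ M.UniqueExpansion := by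
  obtain ⟨B₀, hB₀⟩ := M.exists_isBase
  constructor
  · intro hcard B hB A hA e₁ he₁ e₂ he₂ hbe₁ hbe₂
    set g := fun b => M.K (B \ {b}) with hg
    have himg : g '' B ⊆ M.FBF := hB.image_K_subset_fbf hE
    have hcardB : (g '' B).ncard = B.ncard := ncard_image_of_injOn (hB.injOn_K_diff hE)
    have heq : g '' B = M.FBF := by
      refine eq_of_subset_of_ncard_le himg ?_ (Matroid.fbf_finite hE)
      rw [hcardB, hcard, Matroid.rank_eq_ncard_base hE hB]
    have hKA : M.K A ∈ g '' B := heq ▸ ⟨A, hA, rfl⟩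
    obtain ⟨b, hb, hKb⟩ := hKA
    have key : ∀ e ∈ B, M.IsBase (A ∪ {e}) → e = b := by
      intro e he hbase
      have heE : e ∈ M.E := hB.subset_ground he
      have hecl : e ∉ M.closure A := (hA.base_insert_iff hE hr heE).mp hbase
      have hmem : e ∈ M.K A := by rw [Matroid.K_eq hE hA.1]; exact ⟨heE, hecl⟩
      rw [← hKb] at hmem
      by_contra hne
      exact hB.not_mem_K_diff hE he hne hmem
    rw [key e₁ he₁ hbe₁, key e₂ he₂ hbe₂]
  · intro hUE
    have heq : (fun b => M.K (B₀ \ {b})) '' B₀ = M.FBF := by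
      refine Set.Subset.antisymm (hB₀.image_K_subset_fbf hE) ?_
      rintro D ⟨A, hA, rfl⟩
      obtain ⟨e, heB, hecl⟩ := not_subset.mp (hA.not_base_subset_closure hE hr hB₀)
      have heE : e ∈ M.E := hB₀.subset_ground heB
      have hbase : M.IsBase (A ∪ {e}) := (hA.base_insert_iff hE hr heE).mpr hecl
      have hsec : M.SecondaryBase (B₀ \ {e}) := hB₀.secondaryBase_diff hE heB
      have hAcl : A ⊆ M.closure (B₀ \ {e}) := by
        intro y hy
        by_contra hycl
        have hyE : y ∈ M.E := hA.1.subset_ground hy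
        have hybase : M.IsBase ((B₀ \ {e}) ∪ {y}) := (hsec.base_insert_iff hE hr hyE).mpr hycl
        have hebase : M.IsBase ((B₀ \ {e}) ∪ {e}) := by
          rwa [diff_union_self, union_eq_self_of_subset_right (by simpa using heB)]
        have hye : y = e := hUE (A ∪ {e}) hbase (B₀ \ {e}) hsec y (mem_union_left _ hy)
          e (mem_union_right _ rfl) hybase hebase
        rw [hye] at hy
        have hAe : A ∪ {e} = A := union_eq_self_of_subset_right (by simpa using hy)
        rw [hAe] at hbase
        have h1 := Matroid.rank_eq_ncard_base hE hbase
        have h2 := hA.2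
        omega
      refine ⟨e, heB, ?_⟩
      simp only
      rw [Matroid.K_eq hE hsec.1, Matroid.K_eq hE hA.1,
        hA.closure_eq_of_subset_closure hE hr hsec hAcl]
    rw [← heq, ncard_image_of_injOn (hB₀.injOn_K_diff hE), ← Matroid.rank_eq_ncard_base hE hB₀]
end

section
/- Let M be a unique expansion matroid on a finite ground set E with rank r(M) > 0. If B ⊆ ⋃ B(M) and |B ∩ D| = 1 for every member D of the forming base family F(M), then B is a base of M. -/
open Set

variable {α : Type*}

namespace MyAux

open Matroid

variable {M : Matroid α} {I A B₀ : Set α}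

lemma rSet_indep (hE : M.E.Finite) (hI : M.Indep I) : M.rSet I = I.ncard := by
  have hIfin : I.Finite := hE.subset hI.subset_ground
  unfold Matroid.rSet
  apply IsGreatest.csSup_eq
  refine ⟨⟨I, hI, subset_rfl, rfl⟩, ?_⟩
  rintro n ⟨J, hJ, hJI, rfl⟩
  exact Set.ncard_le_ncard hJI hIfin

lemma indep_ncard_le (hE : M.E.Finite) (hI : M.Indep I) (hB : M.IsBase B₀) :
    I.ncard ≤ B₀.ncard := by
  obtain ⟨B', hB', hIB'⟩ := hI.exists_isBase_superset
  rw [← hB'.ncard_eq_ncard_of_isBase hB]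
  exact Set.ncard_le_ncard hIB' (hE.subset hB'.subset_ground)

lemma rank_eq (hE : M.E.Finite) (hB : M.IsBase B₀) : M.rank = B₀.ncard := by
  unfold Matroid.rank Matroid.rSet
  apply IsGreatest.csSup_eq
  refine ⟨⟨B₀, hB.indep, hB.subset_ground, rfl⟩, ?_⟩
  rintro n ⟨J, hJ, _, rfl⟩
  exact indep_ncard_le hE hJ hB

lemma base_of_indep_ncard (hE : M.E.Finite) (hI : M.Indep I) (h : I.ncard = M.rank) :
    M.IsBase I := by
  obtain ⟨B', hB', hIB'⟩ := hI.exists_isBase_superset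
  have h2 : M.rank = B'.ncard := rank_eq hE hB'
  have hEq : I = B' :=
    Set.eq_of_subset_of_ncard_le hIB' (by omega) (hE.subset hB'.subset_ground)
  rwa [hEq]

lemma base_of_mem_K (hE : M.E.Finite) (hr : 0 < M.rank) (hA : M.SecondaryBase A)
    {y : α} (hy : y ∈ M.K A) : M.IsBase (A ∪ {y}) ∧ y ∉ A := by
  obtain ⟨hyE, hrk⟩ := hy
  have hAfin : A.Finite := hE.subset hA.1.subset_ground
  have hyA : y ∉ A := by
    intro h
    rw [Set.union_eq_self_of_subset_right (by simpa using h)] at hrk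
    omega
  have hrA : M.rSet A = M.rank - 1 := by rw [rSet_indep hE hA.1, hA.2]
  have hr2 : M.rSet (A ∪ {y}) = M.rank := by rw [hrk, hrA]; omega
  have hSne : {n | ∃ I, M.Indep I ∧ I ⊆ A ∪ {y} ∧ I.ncard = n}.Nonempty :=
    ⟨0, ∅, M.empty_indep, Set.empty_subset _, by simp⟩
  have hbdd : BddAbove {n | ∃ I, M.Indep I ∧ I ⊆ A ∪ {y} ∧ I.ncard = n} := by
    refine ⟨M.E.ncard, ?_⟩
    rintro n ⟨I, hI, _, rfl⟩
    exact Set.ncard_le_ncard hI.subset_ground hE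
  have hmem := Nat.sSup_mem hSne hbdd
  rw [show sSup {n | ∃ I, M.Indep I ∧ I ⊆ A ∪ {y} ∧ I.ncard = n} = M.rSet (A ∪ {y}) from rfl,
    hr2] at hmem
  obtain ⟨I, hI, hIsub, hIcard⟩ := hmem
  have hcard_union : (A ∪ {y}).ncard ≤ M.rank := by
    rw [Set.union_singleton]
    calc (insert y A).ncard ≤ A.ncard + 1 := Set.ncard_insert_le _ _
    _ = M.rank := by rw [hA.2]; omega
  have hEq : I = A ∪ {y} :=
    Set.eq_of_subset_of_ncard_le hIsub (by omega) (hAfin.union (Set.finite_singleton y))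
  exact ⟨base_of_indep_ncard hE (hEq ▸ hI) (by rw [← hEq, hIcard]), hyA⟩

lemma mem_K_of_base (hE : M.E.Finite) (hA : M.SecondaryBase A) {e : α} (he : e ∉ A)
    (hB : M.IsBase (A ∪ {e})) : e ∈ M.K A := by
  refine ⟨hB.subset_ground (Set.mem_union_right _ rfl), ?_⟩
  rw [rSet_indep hE hB.indep, rSet_indep hE hA.1, Set.union_singleton,
    Set.ncard_insert_of_notMem he (hE.subset hA.1.subset_ground)]

end MyAux

theorem stmt_7 (M : Matroid α) (hE : M.E.Finite) (hr : 0 < M.rank)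
    (hM : M.UniqueExpansion) (B : Set α)
    (hBsub : B ⊆ ⋃₀ {B' | M.IsBase B'})
    (hBint : ∀ D ∈ M.FBF, (B ∩ D).ncard = 1) :
    M.IsBase B := by
  classical
  obtain ⟨Bex, hBex⟩ := M.exists_isBase
  have hBases_fin : {B' | M.IsBase B'}.Finite :=
    Set.Finite.subset hE.finite_subsets (fun B' hB' => hB'.subset_ground)
  obtain ⟨B₀, hB₀', hmax⟩ := Set.Finite.exists_maximalFor (fun B' => (B' ∩ B).ncard)
    {B' | M.IsBase B'} hBases_fin ⟨Bex, hBex⟩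
  have hB₀ : M.IsBase B₀ := hB₀'
  have hB₀fin : B₀.Finite := hE.subset hB₀.subset_ground
  -- Step 1 : B₀ ⊆ B
  have hB₀B : B₀ ⊆ B := by
    by_contra hcon
    obtain ⟨x, hxB₀, hxB⟩ := Set.not_subset.mp hcon
    have hA : M.SecondaryBase (B₀ \ {x}) := by
      refine ⟨hB₀.indep.subset Set.diff_subset, ?_⟩
      rw [Set.ncard_diff_singleton_of_mem hxB₀, MyAux.rank_eq hE hB₀]
    have hKF : M.K (B₀ \ {x}) ∈ M.FBF := ⟨B₀ \ {x}, hA, rfl⟩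
    obtain ⟨y, hy⟩ := Set.ncard_eq_one.mp (hBint _ hKF)
    have hyBK : y ∈ B ∩ M.K (B₀ \ {x}) := hy ▸ rfl
    have hyB : y ∈ B := hyBK.1
    have hyK : y ∈ M.K (B₀ \ {x}) := hyBK.2
    have hx_union : (B₀ \ {x}) ∪ {x} = B₀ :=
      Set.diff_union_of_subset (by simpa using hxB₀)
    obtain ⟨hBy, hyA⟩ := MyAux.base_of_mem_K hE hr hA hyK
    have hyB₀ : y ∉ B₀ := by
      intro hyB₀
      have := hM B₀ hB₀ (B₀ \ {x}) hA y hyB₀ x hxB₀ hBy (by rw [hx_union]; exact hB₀)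
      exact hxB (this ▸ hyB)
    have hset : ((B₀ \ {x}) ∪ {y}) ∩ B = insert y (B₀ ∩ B) := by
      ext a
      simp only [Set.mem_inter_iff, Set.mem_union, Set.mem_diff, Set.mem_singleton_iff,
        Set.mem_insert_iff]
      constructor
      · rintro ⟨h1 | rfl, h2⟩
        · exact Or.inr ⟨h1.1, h2⟩
        · exact Or.inl rfl
      · rintro (rfl | ⟨h1, h2⟩)
        · exact ⟨Or.inr rfl, hyB⟩
        · exact ⟨Or.inl ⟨h1, fun h => hxB (h ▸ h2)⟩, h2⟩
    have hlt : (B₀ ∩ B).ncard < (((B₀ \ {x}) ∪ {y}) ∩ B).ncard := by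
      rw [hset, Set.ncard_insert_of_notMem (fun h => hyB₀ h.1)
        (hB₀fin.inter_of_left B)]
      omega
    have : (((B₀ \ {x}) ∪ {y}) ∩ B).ncard ≤ (B₀ ∩ B).ncard := hmax hBy (le_of_lt hlt)
    omega
  -- Step 2 : B ⊆ B₀
  have hBB₀ : B ⊆ B₀ := by
    intro z hzB
    by_contra hzB₀
    obtain ⟨B₂, hB₂b, hzB₂⟩ := hBsub hzB
    have hzind : M.Indep {z} := (hB₂b : M.IsBase B₂).indep.subset
      (by simpa using hzB₂)
    obtain ⟨B₃, hB₃, hzB₃, hB₃sub⟩ := hzind.exists_isBase_subset_union_isBase hB₀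
    have hzB₃' : z ∈ B₃ := hzB₃ rfl
    have hB₃fin : B₃.Finite := hE.subset hB₃.subset_ground
    have hAsubB₀ : B₃ \ {z} ⊆ B₀ := by
      rintro a ⟨haB₃, haz⟩
      rcases hB₃sub haB₃ with h | h
      · exact absurd h haz
      · exact h
    have hA : M.SecondaryBase (B₃ \ {z}) := by
      refine ⟨hB₃.indep.subset Set.diff_subset, ?_⟩
      rw [Set.ncard_diff_singleton_of_mem hzB₃', MyAux.rank_eq hE hB₃]
    have hzK : z ∈ M.K (B₃ \ {z}) := by
      refine MyAux.mem_K_of_base hE hA (by simp) ?_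
      rw [Set.diff_union_of_subset (by simpa using hzB₃')]
      exact hB₃
    have hcard1 : (B₀ \ (B₃ \ {z})).ncard = 1 := by
      rw [Set.ncard_diff hAsubB₀ hB₃fin.diff, ← MyAux.rank_eq hE hB₀, hA.2]
      omega
    obtain ⟨w, hw⟩ := Set.ncard_eq_one.mp hcard1
    have hwmem : w ∈ B₀ \ (B₃ \ {z}) := hw ▸ rfl
    have hwB₀ : w ∈ B₀ := hwmem.1
    have hwA : w ∉ B₃ \ {z} := hwmem.2
    have hunion : (B₃ \ {z}) ∪ {w} = B₀ := by
      rw [Set.union_singleton, ← Set.union_singleton, ← hw,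
        Set.union_diff_cancel hAsubB₀]
    have hwK : w ∈ M.K (B₃ \ {z}) := MyAux.mem_K_of_base hE hA hwA (by rw [hunion]; exact hB₀)
    have hKF : M.K (B₃ \ {z}) ∈ M.FBF := ⟨B₃ \ {z}, hA, rfl⟩
    obtain ⟨c, hc⟩ := Set.ncard_eq_one.mp (hBint _ hKF)
    have hz_eq : z = c := by
      have : z ∈ ({c} : Set α) := hc ▸ (⟨hzB, hzK⟩ : z ∈ B ∩ M.K (B₃ \ {z}))
      simpa using this
    have hw_eq : w = c := by
      have : w ∈ ({c} : Set α) := hc ▸ (⟨hB₀B hwB₀, hwK⟩ : w ∈ B ∩ M.K (B₃ \ {z}))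
      simpa using this
    exact hzB₀ (hz_eq ▸ hw_eq ▸ hwB₀)
  have : B = B₀ := hBB₀.antisymm hB₀B
  rwa [this]
end

section
/- Let E be a finite set, let P be a nonempty partition of a subset ⋃ P of E, and let M = M_E(P) be the unique partition matroid on E determined by P. Then the forming base family of M equals P, i.e. F(M_E(P)) = P. -/
open Set

variable {α : Type*}

theorem stmt_12 (E : Set α) (hE : E.Finite) (P : Set (Set α)) (hPne : P ≠ ∅)
    (hP : IsPartitionOn P (⋃₀ P)) (hPE : ⋃₀ P ⊆ E)
    (M : Matroid α) (hME : M.E = E)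
    (hMI : ∀ X, M.Indep X ↔ X ⊆ ⋃₀ P ∧ ∀ D ∈ P, (X ∩ D).ncard ≤ 1) :
    M.FBF = P := by
  classical
  set S := ⋃₀ P with hS
  have hSfin : S.Finite := hE.subset hPE
  have hPfin : P.Finite :=
    hSfin.finite_subsets.subset (fun D hD => subset_sUnion_of_mem hD)
  have hDne : ∀ D ∈ P, D.Nonempty := by
    intro D hD
    rcases eq_empty_or_nonempty D with h | h
    · exact absurd (h ▸ hD) hP.1
    · exact h
  have hdisj := hP.2.2
  obtain ⟨D₀', hD₀'⟩ : ∃ D, D ∈ P := by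
    rcases eq_empty_or_nonempty P with h | h
    · exact absurd h hPne
    · exact h
  have hαne : Nonempty α := ⟨(hDne _ hD₀').some⟩
  have hP1 : 1 ≤ P.ncard := (ncard_pos hPfin).2 ⟨D₀', hD₀'⟩
  let c : Set α → α := fun D => if h : D.Nonempty then h.some else Classical.arbitrary α
  have hc : ∀ D ∈ P, c D ∈ D := fun D hD => by
    simp only [c, dif_pos (hDne D hD)]; exact (hDne D hD).some_mem
  let blk : α → Set α := fun x => if h : ∃ D ∈ P, x ∈ D then h.choose else ∅
  have hblk : ∀ x ∈ S, blk x ∈ P ∧ x ∈ blk x := by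
    intro x hx
    obtain ⟨D, hD, hxD⟩ := hx
    have h : ∃ D ∈ P, x ∈ D := ⟨D, hD, hxD⟩
    simp only [blk, dif_pos h]
    exact ⟨h.choose_spec.1, h.choose_spec.2⟩
  have hblk_eq : ∀ x ∈ S, ∀ D ∈ P, x ∈ D → blk x = D := by
    intro x hx D hD hxD
    by_contra hne
    have h0 := hdisj _ ((hblk x hx).1) _ hD hne
    have : x ∈ blk x ∩ D := mem_inter (hblk x hx).2 hxD
    rw [h0] at this
    exact notMem_empty x this
  have hIndS : ∀ I, M.Indep I → I ⊆ S := fun I hI => ((hMI I).1 hI).1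
  have hIfin : ∀ I, M.Indep I → I.Finite := fun I hI => hSfin.subset (hIndS I hI)
  have hIempty : M.Indep ∅ := (hMI ∅).2 ⟨empty_subset _, fun D _ => by simp⟩
  have hinj : ∀ I, M.Indep I → InjOn blk I := by
    intro I hI x hx y hy hxy
    by_contra hne
    have hDP := (hblk x (hIndS I hI hx)).1
    have h2 : 1 < (I ∩ blk x).ncard := by
      rw [one_lt_ncard_iff ((hIfin I hI).subset inter_subset_left)]
      exact ⟨x, y, ⟨hx, (hblk x (hIndS I hI hx)).2⟩,
        ⟨hy, by rw [hxy]; exact (hblk y (hIndS I hI hy)).2⟩, hne⟩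
    exact absurd (((hMI I).1 hI).2 _ hDP) (not_le.2 h2)
  have hcard : ∀ I, M.Indep I → I.ncard ≤ P.ncard := fun I hI =>
    ncard_le_ncard_of_injOn blk (fun x hx => (hblk x (hIndS I hI hx)).1) (hinj I hI) hPfin
  have hbdd : ∀ X : Set α, BddAbove {n | ∃ I, M.Indep I ∧ I ⊆ X ∧ I.ncard = n} :=
    fun X => ⟨P.ncard, fun n ⟨I, hI, _, hn⟩ => hn ▸ hcard I hI⟩
  have hrSet_ge : ∀ X I, M.Indep I → I ⊆ X → I.ncard ≤ M.rSet X :=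
    fun X I hI hIX => le_csSup (hbdd X) ⟨I, hI, hIX, rfl⟩
  have hrSet_le : ∀ X m, (∀ I, M.Indep I → I ⊆ X → I.ncard ≤ m) → M.rSet X ≤ m := by
    intro X m h
    exact csSup_le ⟨0, ∅, hIempty, empty_subset _, ncard_empty _⟩
      (fun n ⟨I, hI, hIX, hn⟩ => hn ▸ h I hI hIX)
  have hrSet_indep : ∀ I, M.Indep I → M.rSet I = I.ncard := by
    intro I hI
    refine le_antisymm (hrSet_le I I.ncard ?_) (hrSet_ge I I hI subset_rfl)
    intro J hJ hJI
    exact ncard_le_ncard hJI (hIfin I hI)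
  have htrans : ∀ Q ⊆ P, M.Indep (c '' Q) ∧ (c '' Q).ncard = Q.ncard := by
    intro Q hQP
    have hcQ : InjOn c Q := by
      intro D hD D' hD' h
      by_contra hne
      have h0 := hdisj _ (hQP hD) _ (hQP hD') hne
      have : c D ∈ D ∩ D' := mem_inter (hc D (hQP hD)) (by rw [h]; exact hc D' (hQP hD'))
      rw [h0] at this
      exact notMem_empty _ this
    constructor
    · refine (hMI _).2 ⟨?_, ?_⟩
      · rintro x ⟨D, hD, rfl⟩
        exact ⟨D, hQP hD, hc D (hQP hD)⟩
      · intro D hD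
        have hsub : c '' Q ∩ D ⊆ {c D} := by
          rintro x ⟨⟨D', hD', rfl⟩, hxD⟩
          by_cases h : D' = D
          · subst h; rfl
          · exfalso
            have h0 := hdisj _ (hQP hD') _ hD h
            have : c D' ∈ D' ∩ D := mem_inter (hc D' (hQP hD')) hxD
            rw [h0] at this
            exact notMem_empty _ this
        calc (c '' Q ∩ D).ncard ≤ ({c D} : Set α).ncard :=
              ncard_le_ncard hsub (finite_singleton _)
          _ = 1 := ncard_singleton _
    · exact ncard_image_of_injOn hcQ
  have hrank : M.rank = P.ncard := by
    obtain ⟨hTind, hTcard⟩ := htrans P subset_rfl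
    refine le_antisymm (hrSet_le M.E P.ncard (fun I hI _ => hcard I hI)) ?_
    rw [← hTcard]
    exact hrSet_ge M.E _ hTind hTind.subset_ground
  have hK_eq : ∀ A D₀, M.Indep A → D₀ ∈ P → A ∩ D₀ = ∅ →
      (∀ D ∈ P, D ≠ D₀ → (A ∩ D).Nonempty) → M.K A = D₀ := by
    intro A D₀ hA hD₀ hAD₀ hAD
    have hAfin := hIfin A hA
    have hAS := hIndS A hA
    ext a
    simp only [Matroid.K, mem_setOf_eq, hME]
    constructor
    · rintro ⟨haE, hra⟩
      by_contra haD₀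
      have hle : M.rSet (A ∪ {a}) ≤ A.ncard := by
        apply hrSet_le
        intro I hI hIA
        by_cases haI : a ∈ I
        · by_cases haA : a ∈ A
          · refine ncard_le_ncard ?_ hAfin
            rw [union_eq_self_of_subset_right (singleton_subset_iff.2 haA)] at hIA
            exact hIA
          · have haS : a ∈ S := hIndS I hI haI
            obtain ⟨hblkP, hablk⟩ := hblk a haS
            have hblkne : blk a ≠ D₀ := fun h => haD₀ (by rw [← h]; exact hablk)
            obtain ⟨b, hbA, hbD⟩ := hAD (blk a) hblkP hblkne
            by_contra hlt
            push_neg at hlt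
            have hIcard : A.ncard + 1 ≤ I.ncard := hlt
            have hIeq : I = A ∪ {a} := by
              refine eq_of_subset_of_ncard_le hIA ?_ (hAfin.union (finite_singleton a))
              rw [union_singleton, ncard_insert_of_notMem haA hAfin]
              exact hIcard
            have h2 : 1 < (I ∩ blk a).ncard := by
              rw [one_lt_ncard_iff ((hIfin I hI).subset inter_subset_left)]
              refine ⟨a, b, ⟨haI, hablk⟩,
                ⟨by rw [hIeq]; exact mem_union_left _ hbA, hbD⟩,
                fun h => haA (by rw [h]; exact hbA)⟩
            exact absurd (((hMI I).1 hI).2 _ hblkP) (not_le.2 h2)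
        · have hsub : I ⊆ A := fun x hx => (hIA hx).resolve_right (fun h => haI (h ▸ hx))
          exact ncard_le_ncard hsub hAfin
      rw [hrSet_indep A hA] at hra
      rw [hra] at hle
      omega
    · intro haD₀
      have haS : a ∈ S := ⟨D₀, hD₀, haD₀⟩
      have haA : a ∉ A := fun h => notMem_empty a (hAD₀ ▸ mem_inter h haD₀)
      have hUind : M.Indep (A ∪ {a}) := by
        refine (hMI _).2 ⟨union_subset hAS (singleton_subset_iff.2 haS), ?_⟩
        intro D hD
        by_cases hDD₀ : D = D₀
        · subst hDD₀
          have heq : (A ∪ {a}) ∩ D = {a} ∩ D := by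
            rw [union_inter_distrib_right, hAD₀, empty_union]
          rw [heq]
          exact le_trans (ncard_le_ncard inter_subset_left (finite_singleton a))
            (by simp)
        · have haD : a ∉ D := fun h =>
            notMem_empty a ((hdisj _ hD _ hD₀ hDD₀) ▸ mem_inter h haD₀)
          have heq : (A ∪ {a}) ∩ D = A ∩ D := by
            rw [union_inter_distrib_right]
            have h1 : ({a} : Set α) ∩ D = ∅ := by
              ext x; simp only [mem_inter_iff, mem_singleton_iff,
                mem_empty_iff_false, iff_false, not_and]
              rintro rfl; exact haD
            rw [h1, union_empty]
          rw [heq]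
          exact ((hMI A).1 hA).2 D hD
      refine ⟨hPE haS, ?_⟩
      rw [hrSet_indep _ hUind, hrSet_indep A hA, union_singleton,
        ncard_insert_of_notMem haA hAfin]
  have hsec : ∀ A, M.SecondaryBase A →
      ∃ D₀ ∈ P, A ∩ D₀ = ∅ ∧ ∀ D ∈ P, D ≠ D₀ → (A ∩ D).Nonempty := by
    intro A hAsec
    obtain ⟨hA, hAcard⟩ := hAsec
    rw [hrank] at hAcard
    have hQP : blk '' A ⊆ P := by
      rintro _ ⟨x, hx, rfl⟩; exact (hblk x (hIndS A hA hx)).1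
    have hQcard : (blk '' A).ncard = P.ncard - 1 := by
      rw [ncard_image_of_injOn (hinj A hA), hAcard]
    have hPQ : (P \ blk '' A).ncard = 1 := by
      rw [ncard_diff hQP (hPfin.subset hQP), hQcard]
      omega
    obtain ⟨D₀, hD₀⟩ := ncard_eq_one.1 hPQ
    have hD₀mem : D₀ ∈ P \ blk '' A := by rw [hD₀]; exact rfl
    refine ⟨D₀, hD₀mem.1, ?_, ?_⟩
    · by_contra h
      obtain ⟨x, hxA, hxD⟩ := nonempty_iff_ne_empty.2 h
      exact hD₀mem.2 ⟨x, hxA, hblk_eq x (hIndS A hA hxA) D₀ hD₀mem.1 hxD⟩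
    · intro D hD hne
      have hDQ : D ∈ blk '' A := by
        by_contra h
        have hmem : D ∈ P \ blk '' A := ⟨hD, h⟩
        rw [hD₀] at hmem
        exact hne hmem
      obtain ⟨x, hxA, hxb⟩ := hDQ
      exact ⟨x, hxA, by rw [← hxb]; exact (hblk x (hIndS A hA hxA)).2⟩
  ext D
  constructor
  · rintro ⟨A, hAsec, rfl⟩
    obtain ⟨D₀, hD₀P, h1, h2⟩ := hsec A hAsec
    rw [hK_eq A D₀ hAsec.1 hD₀P h1 h2]
    exact hD₀P
  · intro hD
    obtain ⟨hAind, hAcard⟩ := htrans (P \ {D}) diff_subset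
    have hAD : c '' (P \ {D}) ∩ D = ∅ := by
      ext x
      simp only [mem_inter_iff, mem_empty_iff_false, iff_false, not_and]
      rintro ⟨D', hD', rfl⟩ hxD
      have hne : D' ≠ D := hD'.2
      have h0 := hdisj _ hD'.1 _ hD hne
      have : c D' ∈ D' ∩ D := mem_inter (hc D' hD'.1) hxD
      rw [h0] at this
      exact notMem_empty _ this
    have hAD' : ∀ D' ∈ P, D' ≠ D → (c '' (P \ {D}) ∩ D').Nonempty := by
      intro D' hD' hne
      exact ⟨c D', ⟨D', ⟨hD', fun h => hne h⟩, rfl⟩, hc D' hD'⟩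
    have hsecA : M.SecondaryBase (c '' (P \ {D})) := by
      refine ⟨hAind, ?_⟩
      rw [hAcard, hrank, ncard_diff (singleton_subset_iff.2 hD) (finite_singleton D),
        ncard_singleton]
    exact ⟨c '' (P \ {D}), hsecA, (hK_eq _ D hAind hD hAD hAD').symm⟩
end

section
/- Let M be a matroid on a finite ground set E with rank r(M) > 0. Then M is a unique expansion matroid if and only if M is a unique partition matroid, i.e. if and only if there exists a partition P of a subset ⋃ P of E such that the independent sets of M are exactly the sets X ⊆ ⋃ P with |X ∩ D| ≤ 1 for every D ∈ P. -/
open Set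

variable {α : Type*}

section aux
variable {M : Matroid α} {A B I X : Set α}

lemma aux_indep_ncard_le_base (hE : M.E.Finite) (hI : M.Indep I) (hB : M.IsBase B) :
    I.ncard ≤ B.ncard := by
  obtain ⟨B', hB', hIB'⟩ := hI.exists_isBase_superset
  calc I.ncard ≤ B'.ncard := ncard_le_ncard hIB' (hE.subset hB'.subset_ground)
    _ = B.ncard := hB'.ncard_eq_ncard_of_isBase hB

lemma aux_rank_eq (hE : M.E.Finite) (hB : M.IsBase B) : M.rank = B.ncard := by
  unfold Matroid.rank Matroid.rSet
  have hmem : B.ncard ∈ {n | ∃ I, M.Indep I ∧ I ⊆ M.E ∧ I.ncard = n} :=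
    ⟨B, hB.indep, hB.subset_ground, rfl⟩
  have hbdd : ∀ n ∈ {n | ∃ I, M.Indep I ∧ I ⊆ M.E ∧ I.ncard = n}, n ≤ B.ncard := by
    rintro n ⟨I, hI, -, rfl⟩
    exact aux_indep_ncard_le_base hE hI hB
  exact le_antisymm (csSup_le ⟨B.ncard, hmem⟩ hbdd) (le_csSup ⟨B.ncard, hbdd⟩ hmem)

lemma aux_indep_ncard_le_rank (hE : M.E.Finite) (hI : M.Indep I) : I.ncard ≤ M.rank := by
  obtain ⟨B, hB⟩ := M.exists_isBase
  rw [aux_rank_eq hE hB]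
  exact aux_indep_ncard_le_base hE hI hB

end aux

section par
variable {M : Matroid α} {A B I X : Set α} {x y : α}

lemma aux_nonloop_not_mem_cl_empty (hx : M.Indep {x}) : x ∉ M.closure ∅ := by
  have h := (M.empty_indep.insert_indep_iff_of_notMem (notMem_empty x)).mp
    (by simpa using hx)
  exact h.2

lemma aux_cl_eq_of_mem_cl (hy : M.Indep {y}) (hxy : y ∈ M.closure {x}) :
    M.closure {y} = M.closure {x} := by
  apply le_antisymm
  · exact M.closure_subset_closure_of_subset_closure (singleton_subset_iff.mpr hxy)
  · have hx : x ∈ M.closure {y} := by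
      have h : y ∈ M.closure (insert x ∅) \ M.closure ∅ := by
        simpa using ⟨hxy, aux_nonloop_not_mem_cl_empty hy⟩
      simpa using (Matroid.closure_exchange h).1
    exact M.closure_subset_closure_of_subset_closure (singleton_subset_iff.mpr hx)

lemma aux_pair_dep (hx : M.Indep {x}) (hy : y ∈ M.E) (hxy : y ∈ M.closure {x}) (hne : y ≠ x) :
    ¬ M.Indep {x, y} := by
  intro h
  have : M.Indep (insert y {x}) := by
    rwa [pair_comm] at h
  rw [hx.insert_indep_iff_of_notMem (by simpa using hne)] at this
  exact this.2 hxy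

end par

section key
variable {M : Matroid α} {A B I X : Set α} {x y : α}

lemma aux_key (hE : M.E.Finite) (hUE : M.UniqueExpansion) (X : Set α)
    (hXE : X ⊆ M.E) (hX1 : ∀ x ∈ X, M.Indep {x})
    (hX2 : ∀ x ∈ X, ∀ y ∈ X, y ∈ M.closure {x} → y = x) : M.Indep X := by
  by_contra hX
  have hXfin : X.Finite := hE.subset hXE
  set S : Set ℕ := {n | ∃ C, C ⊆ X ∧ ¬ M.Indep C ∧ C.ncard = n} with hS
  have hSne : S.Nonempty := ⟨X.ncard, X, Subset.rfl, hX, rfl⟩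
  obtain ⟨C, hCX, hCdep, hCcard⟩ := Nat.sInf_mem hSne
  have hCfin : C.Finite := hXfin.subset hCX
  have hmin : ∀ C', C' ⊆ X → C'.ncard < C.ncard → M.Indep C' := by
    intro C' hC' hlt
    by_contra h
    have := Nat.sInf_le (show C'.ncard ∈ S from ⟨C', hC', h, rfl⟩)
    omega
  have hssub : ∀ C', C' ⊂ C → M.Indep C' := fun C' h ↦
    hmin C' (h.subset.trans hCX) (ncard_lt_ncard h hCfin)
  -- |C| ≥ 3
  have h3 : 3 ≤ C.ncard := by
    by_contra h
    push_neg at h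
    interval_cases hc : C.ncard
    · exact hCdep (by rw [(ncard_eq_zero hCfin).mp hc]; exact M.empty_indep)
    · obtain ⟨a, rfl⟩ := ncard_eq_one.mp hc
      exact hCdep (hX1 a (hCX rfl))
    · obtain ⟨a, b, hab, rfl⟩ := ncard_eq_two.mp hc
      have ha : M.Indep {a} := hX1 a (hCX (by simp))
      have hbE : b ∈ M.E := hXE (hCX (by simp))
      have hbcl : b ∈ M.closure {a} := by
        by_contra hbcl
        exact hCdep (by
          rw [show ({a, b} : Set α) = insert b {a} by rw [pair_comm]]
          rw [ha.insert_indep_iff_of_notMem (by simpa using Ne.symm hab)]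
          exact ⟨hbE, hbcl⟩)
      exact hab ((hX2 a (hCX (by simp)) b (hCX (by simp)) hbcl).symm)
  have hCne : C.Nonempty := by
    rw [← ncard_pos hCfin]; omega
  obtain ⟨x, hx⟩ := hCne
  set J : Set α := C \ {x} with hJdef
  have hJC : J ⊂ C := sdiff_singleton_ssubset.mpr hx
  have hJ : M.Indep J := hssub J hJC
  have hJfin : J.Finite := hCfin.subset hJC.subset
  have hJcard : J.ncard = C.ncard - 1 := ncard_diff_singleton_of_mem hx
  have hJ2 : 1 < J.ncard := by omega
  obtain ⟨c₂, hc₂J, c₃, hc₃J, hc₂₃⟩ := (one_lt_ncard hJfin).mp hJ2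
  have hxJ : x ∉ J := by simp [hJdef]
  have hxE : x ∈ M.E := hXE (hCX hx)
  have hCeq : insert x J = C := by
    rw [hJdef, insert_diff_singleton, insert_eq_of_mem hx]
  have hxclJ : x ∈ M.closure J := by
    by_contra h
    exact hCdep (by rw [← hCeq]; exact (hJ.insert_indep_iff_of_notMem hxJ).mpr ⟨hxE, h⟩)
  -- C \ {c₂} independent, so x ∉ cl (J \ {c₂})
  have hxc₂ : x ≠ c₂ := fun h ↦ hxJ (h ▸ hc₂J)
  have hxc₃ : x ≠ c₃ := fun h ↦ hxJ (h ▸ hc₃J)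
  have heq2 : insert x (J \ {c₂}) = C \ {c₂} := by
    rw [hJdef, diff_diff_comm, insert_diff_singleton, insert_eq_of_mem (show x ∈ C \ {c₂} from ⟨hx, hxc₂⟩)]
  have hCc₂ : M.Indep (C \ {c₂}) :=
    hssub _ (sdiff_singleton_ssubset.mpr (hJC.subset hc₂J))
  have hxcl2 : x ∉ M.closure (J \ {c₂}) := by
    have h1 : M.Indep (insert x (J \ {c₂})) := by rw [heq2]; exact hCc₂
    have := ((hJ.subset diff_subset).insert_indep_iff_of_notMem
      (fun h ↦ hxJ h.1)).mp h1
    exact this.2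
  have hc₂cl : c₂ ∈ M.closure (insert x (J \ {c₂})) := by
    have h : x ∈ M.closure (insert c₂ (J \ {c₂})) \ M.closure (J \ {c₂}) := by
      rw [insert_diff_singleton, insert_eq_of_mem hc₂J]
      exact ⟨hxclJ, hxcl2⟩
    exact (Matroid.closure_exchange h).1
  -- base containing J
  obtain ⟨B, hB, hJB⟩ := hJ.exists_isBase_superset
  have hBfin : B.Finite := hE.subset hB.subset_ground
  have hxB : x ∉ B := fun h ↦ hCdep (hB.indep.subset (by rw [← hCeq]; exact insert_subset h hJB))
  have hc₂B : c₂ ∈ B := hJB hc₂J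
  set A : Set α := B \ {c₂} with hAdef
  have hAfin : A.Finite := hBfin.subset diff_subset
  have hA : M.SecondaryBase A :=
    ⟨hB.indep.subset diff_subset, by
      rw [hAdef, ncard_diff_singleton_of_mem hc₂B, aux_rank_eq hE hB]⟩
  have hxA : x ∉ A := fun h ↦ hxB h.1
  have hAc₂ : A ∪ {c₂} = B := by
    rw [union_singleton, hAdef, insert_diff_singleton, insert_eq_of_mem hc₂B]
  have hAc₂base : M.IsBase (A ∪ {c₂}) := by rw [hAc₂]; exact hB
  -- A ∪ {x} is a base
  have hAxE : insert x A ⊆ M.E := insert_subset hxE (diff_subset.trans hB.subset_ground)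
  have hspan : M.Spanning (insert x A) := by
    have hBsub : B ⊆ M.closure (insert x A) := by
      intro b hb
      by_cases hbc : b = c₂
      · subst hbc
        refine M.closure_subset_closure (insert_subset_insert ?_) hc₂cl
        exact diff_subset_diff_left hJB
      · exact M.subset_closure _ hAxE (Or.inr ⟨hb, hbc⟩)
    refine ⟨le_antisymm (M.closure_subset_ground _) ?_, hAxE⟩
    calc M.E = M.closure B := hB.closure_eq.symm
      _ ⊆ M.closure (M.closure (insert x A)) := M.closure_subset_closure hBsub
      _ = M.closure (insert x A) := M.closure_closure _
  have hBpos : 0 < B.ncard := (ncard_pos hBfin).mpr ⟨c₂, hc₂B⟩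
  have hAxcard : (insert x A).ncard = B.ncard := by
    rw [ncard_insert_of_notMem hxA hAfin, hAdef, ncard_diff_singleton_of_mem hc₂B]
    omega
  have hAxbase : M.IsBase (A ∪ {x}) := by
    rw [union_singleton]
    obtain ⟨B₀, hB₀, hB₀sub⟩ := hspan.exists_isBase_subset
    have hcard : (insert x A).ncard ≤ B₀.ncard := by
      rw [hAxcard, hB₀.ncard_eq_ncard_of_isBase hB]
    rw [← eq_of_subset_of_ncard_le hB₀sub hcard (hE.subset hAxE)]
    exact hB₀
  -- base containing C \ {c₃}, which contains both x and c₂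
  obtain ⟨B', hB', hCB'⟩ := (hssub _ (sdiff_singleton_ssubset.mpr (hJC.subset hc₃J))).exists_isBase_superset
  have hxB' : x ∈ B' := hCB' ⟨hx, hxc₃⟩
  have hc₂B' : c₂ ∈ B' := hCB' ⟨hJC.subset hc₂J, hc₂₃⟩
  exact hxc₂ (hUE B' hB' A hA x hxB' c₂ hc₂B' hAxbase hAc₂base)

end key

theorem stmt_13 (M : Matroid α) (hE : M.E.Finite) (hr : 0 < M.rank) :
    M.UniqueExpansion ↔
      ∃ P : Set (Set α), IsPartitionOn P (⋃₀ P) ∧ ⋃₀ P ⊆ M.E ∧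
        ∀ X, M.Indep X ↔ X ⊆ ⋃₀ P ∧ ∀ D ∈ P, (X ∩ D).ncard ≤ 1 := by
  constructor
  · -- unique expansion → partition by parallel classes
    intro hUE
    set NL : Set α := {y | y ∈ M.E ∧ M.Indep {y}} with hNL
    set pcl : α → Set α := fun x => {y | y ∈ NL ∧ y ∈ M.closure {x}} with hpcl
    have hNLE : NL ⊆ M.E := fun y hy => hy.1
    have hself : ∀ x ∈ NL, x ∈ pcl x := fun x hx =>
      ⟨hx, M.subset_closure {x} (singleton_subset_iff.mpr hx.1) rfl⟩
    have hpclNL : ∀ x, pcl x ⊆ NL := fun x y hy => hy.1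
    have hUn : ⋃₀ (pcl '' NL) = NL := by
      apply subset_antisymm
      · apply sUnion_subset
        rintro D ⟨x, hx, rfl⟩
        exact hpclNL x
      · intro y hy
        exact ⟨pcl y, mem_image_of_mem _ hy, hself y hy⟩
    have hcl_eq : ∀ x y, y ∈ pcl x → pcl y = pcl x := by
      intro x y hy
      have h := aux_cl_eq_of_mem_cl hy.1.2 hy.2
      ext z
      simp only [hpcl, mem_setOf_eq, h]
    refine ⟨pcl '' NL, ⟨?_, rfl, ?_⟩, by rw [hUn]; exact hNLE, ?_⟩
    · rintro ⟨x, hx, hpx⟩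
      exact (hpx ▸ hself x hx :)
    · rintro K ⟨a, ha, rfl⟩ L ⟨b, hb, rfl⟩ hne
      rw [eq_empty_iff_forall_notMem]
      rintro z ⟨hza, hzb⟩
      exact hne ((hcl_eq a z hza).symm.trans (hcl_eq b z hzb))
    · intro X
      constructor
      · intro hX
        have hXNL : X ⊆ NL := fun x hx =>
          ⟨hX.subset_ground hx, hX.subset (singleton_subset_iff.mpr hx)⟩
        refine ⟨by rw [hUn]; exact hXNL, ?_⟩
        rintro D ⟨z, hz, rfl⟩
        rw [ncard_le_one (hE.subset (inter_subset_left.trans hX.subset_ground))]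
        rintro a ⟨haX, haz⟩ b ⟨hbX, hbz⟩
        by_contra hab
        have hca := aux_cl_eq_of_mem_cl haz.1.2 haz.2
        have hcb := aux_cl_eq_of_mem_cl hbz.1.2 hbz.2
        have hbcla : b ∈ M.closure {a} := by rw [hca, ← hcb]; exact hself b hbz.1 |>.2
        exact aux_pair_dep haz.1.2 hbz.1.1 hbcla (Ne.symm hab)
          (hX.subset (insert_subset haX (singleton_subset_iff.mpr hbX)))
      · rintro ⟨hsub, hcond⟩
        rw [hUn] at hsub
        refine aux_key hE hUE X (hsub.trans hNLE) (fun x hx => (hsub hx).2) ?_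
        intro x hx y hy hycl
        have hxNL := hsub hx
        have h1 := hcond (pcl x) (mem_image_of_mem _ hxNL)
        have := (ncard_le_one (hE.subset (inter_subset_left.trans (hsub.trans hNLE)))).mp h1
        exact this y ⟨hy, hsub hy, hycl⟩ x ⟨hx, hself x hxNL⟩
  · -- partition matroid → unique expansion
    rintro ⟨P, ⟨hPne, -, hPdisj⟩, hPE, hspec⟩
    intro B hB A hA e₁ he₁ e₂ he₂ hbe₁ hbe₂
    have hdisj' : ∀ K ∈ P, ∀ L ∈ P, ∀ z, z ∈ K → z ∈ L → K = L := by
      intro K hK L hL z hzK hzL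
      by_contra hne
      have h := hPdisj K hK L hL hne
      exact absurd (mem_inter hzK hzL) (by rw [h]; exact notMem_empty z)
    have hrank := aux_rank_eq hE hB
    have heA : ∀ e, M.IsBase (A ∪ {e}) → e ∉ A := by
      intro e hbe he
      have h1 : A ∪ {e} = A := by rw [union_singleton, insert_eq_of_mem he]
      have h2 := aux_rank_eq hE hbe
      rw [h1, hA.2] at h2
      omega
    have he₁A := heA e₁ hbe₁
    have he₂A := heA e₂ hbe₂
    obtain ⟨hsub₁, hcard₁⟩ := (hspec _).mp hbe₁.indep
    obtain ⟨hsub₂, hcard₂⟩ := (hspec _).mp hbe₂.indep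
    obtain ⟨D₁, hD₁P, he₁D₁⟩ := hsub₁ (Or.inr rfl)
    obtain ⟨D₂, hD₂P, he₂D₂⟩ := hsub₂ (Or.inr rfl)
    by_cases hD : D₁ = D₂
    · subst hD
      obtain ⟨-, hcardB⟩ := (hspec B).mp hB.indep
      exact (ncard_le_one (hE.subset (inter_subset_left.trans hB.subset_ground))).mp
        (hcardB D₁ hD₁P) e₁ ⟨he₁, he₁D₁⟩ e₂ ⟨he₂, he₂D₂⟩
    · exfalso
      have hne : e₁ ≠ e₂ := by
        intro h
        exact hD (hdisj' D₁ hD₁P D₂ hD₂P e₁ he₁D₁ (h ▸ he₂D₂))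
      have hAD₂ : ∀ a ∈ A, a ∉ D₂ := by
        intro a haA haD₂
        have h := (ncard_le_one (hE.subset (inter_subset_left.trans
          hbe₂.indep.subset_ground))).mp (hcard₂ D₂ hD₂P)
          a ⟨Or.inl haA, haD₂⟩ e₂ ⟨Or.inr rfl, he₂D₂⟩
        exact he₂A (h ▸ haA)
      have he₁D₂ : e₁ ∉ D₂ := fun h => hD (hdisj' D₁ hD₁P D₂ hD₂P e₁ he₁D₁ h)
      have he₂notin : e₂ ∉ A ∪ {e₁} := by
        rintro (h | h)
        · exact he₂A h
        · exact hne h.symm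
      set X : Set α := insert e₂ (A ∪ {e₁}) with hX
      have hXindep : M.Indep X := by
        refine (hspec X).mpr ⟨insert_subset (mem_sUnion.mpr ⟨D₂, hD₂P, he₂D₂⟩) hsub₁, ?_⟩
        intro D hDP
        by_cases he₂D : e₂ ∈ D
        · have hDD₂ : D = D₂ := hdisj' D hDP D₂ hD₂P e₂ he₂D he₂D₂
          subst hDD₂
          have : X ∩ D ⊆ {e₂} := by
            rintro z ⟨hz1, hz2⟩
            rcases hz1 with h | h | h
            · exact h
            · exact absurd hz2 (hAD₂ z h)
            · exact absurd hz2 (h ▸ he₁D₂)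
          calc (X ∩ D).ncard ≤ ({e₂} : Set α).ncard :=
                ncard_le_ncard this (finite_singleton e₂)
            _ = 1 := ncard_singleton e₂
        · have hsub' : X ∩ D ⊆ (A ∪ {e₁}) ∩ D := by
            rintro z ⟨hz1, hz2⟩
            rcases hz1 with h | h
            · exact absurd hz2 (h ▸ he₂D)
            · exact ⟨h, hz2⟩
          calc (X ∩ D).ncard ≤ ((A ∪ {e₁}) ∩ D).ncard :=
                ncard_le_ncard hsub' (hE.subset (inter_subset_left.trans
                  hbe₁.indep.subset_ground))
            _ ≤ 1 := hcard₁ D hDP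
      have hc1 : X.ncard = (A ∪ {e₁}).ncard + 1 :=
        ncard_insert_of_notMem he₂notin (hE.subset hbe₁.indep.subset_ground)
      have hc2 := aux_rank_eq hE hbe₁
      have hc3 := aux_indep_ncard_le_rank hE hXindep
      omega
end

section
/- Let M be a matroid on a finite ground set E and let P be a partition of ⋃ B(M), the union of all bases of M. Then every base B of M satisfies |B ∩ K| = 1 for every K ∈ P if and only if the base family of M consists exactly of the sets obtained by selecting one and only one element from each block of P, i.e. B(M) = {B ⊆ ⋃ P : |B ∩ K| = 1 for every K ∈ P}. -/
open Set

variable {α : Type*}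

theorem stmt_15 (M : Matroid α) (hE : M.E.Finite) (P : Set (Set α))
    (hP : IsPartitionOn P (⋃₀ {B | M.IsBase B})) :
    (∀ B, M.IsBase B → ∀ K ∈ P, (B ∩ K).ncard = 1) ↔
      {B | M.IsBase B} = {B | B ⊆ ⋃₀ P ∧ ∀ K ∈ P, (B ∩ K).ncard = 1} := by
  obtain ⟨hne, hUnion, hdisj⟩ := hP
  constructor
  · intro h
    have hbfin : {B | M.IsBase B}.Finite :=
      hE.finite_subsets.subset (fun B hB => hB.subset_ground)
    ext T
    simp only [mem_setOf_eq]
    constructor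
    · intro hT
      refine ⟨?_, h T hT⟩
      rw [hUnion]
      exact fun x hx => ⟨T, hT, hx⟩
    · rintro ⟨hTsub, hTK⟩
      obtain ⟨B, hB, hmax⟩ := Set.exists_max_image {B | M.IsBase B}
        (fun B => (B ∩ T).ncard) hbfin M.exists_isBase
      simp only [mem_setOf_eq] at hB
      have hBT : B ⊆ T := by
        by_contra hcon
        obtain ⟨x, hxB, hxT⟩ := not_subset.1 hcon
        have hxS : x ∈ ⋃₀ P := by rw [hUnion]; exact ⟨B, hB, hxB⟩
        obtain ⟨K, hK, hxK⟩ := hxS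
        obtain ⟨a, ha⟩ := Set.ncard_eq_one.1 (h B hB K hK)
        have hax : a = x := by
          have : x ∈ B ∩ K := ⟨hxB, hxK⟩
          rw [ha] at this; exact this.symm
        subst hax
        obtain ⟨y, hy⟩ := Set.ncard_eq_one.1 (hTK K hK)
        have hyT : y ∈ T := by
          have : y ∈ T ∩ K := by rw [hy]; rfl
          exact this.1
        have hyK : y ∈ K := by
          have : y ∈ T ∩ K := by rw [hy]; rfl
          exact this.2
        have hyx : y ≠ a := by rintro rfl; exact hxT hyT
        have hyS : y ∈ ⋃₀ {B | M.IsBase B} := by rw [← hUnion]; exact hTsub hyT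
        obtain ⟨B'', hB'', hyB''⟩ := hyS
        simp only [mem_setOf_eq] at hB''
        obtain ⟨b, hb⟩ := Set.ncard_eq_one.1 (h B'' hB'' K hK)
        have hby : b = y := by
          have : y ∈ B'' ∩ K := ⟨hyB'', hyK⟩
          rw [hb] at this; exact this.symm
        rw [hby] at hb
        have hxB'' : a ∉ B'' := by
          intro hmem
          have : a ∈ B'' ∩ K := ⟨hmem, hxK⟩
          rw [hb] at this
          exact hyx this.symm
        obtain ⟨z, hzB'', hB'⟩ := hB.exchange hB'' ⟨hxB, hxB''⟩
        obtain ⟨c, hc⟩ := Set.ncard_eq_one.1 (h _ hB' K hK)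
        have hcz : c = z := by
          have hcmem : c ∈ insert z (B \ {a}) ∩ K := by rw [hc]; rfl
          rcases hcmem.1 with h1 | h1
          · exact h1
          · exfalso
            have : c ∈ B ∩ K := ⟨h1.1, hcmem.2⟩
            rw [ha] at this
            exact h1.2 this
        have hzK : z ∈ K := by
          have hcm : c ∈ insert z (B \ {a}) ∩ K := by rw [hc]; rfl
          rw [hcz] at hcm; exact hcm.2
        have hzy : z = y := by
          have : z ∈ B'' ∩ K := ⟨hzB''.1, hzK⟩
          rw [hb] at this; exact this
        subst hzy
        have hIeq : insert z (B \ {a}) ∩ T = insert z (B ∩ T) := by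
          ext w
          simp only [Set.mem_inter_iff, Set.mem_insert_iff, Set.mem_diff,
            Set.mem_singleton_iff]
          constructor
          · rintro ⟨h1 | h1, h2⟩
            · exact Or.inl h1
            · exact Or.inr ⟨h1.1, h2⟩
          · rintro (rfl | ⟨h1, h2⟩)
            · exact ⟨Or.inl rfl, hyT⟩
            · refine ⟨Or.inr ⟨h1, ?_⟩, h2⟩
              rintro rfl; exact hxT h2
        have hfin : (B ∩ T).Finite := hE.subset (fun w hw => hB.subset_ground hw.1)
        have hlt : (B ∩ T).ncard < (insert z (B \ {a}) ∩ T).ncard := by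
          rw [hIeq, Set.ncard_insert_of_notMem (fun hc => hzB''.2 hc.1) hfin]
          omega
        exact absurd (hmax _ hB') (not_le.2 hlt)
      have hTB : T ⊆ B := by
        intro t ht
        have htS : t ∈ ⋃₀ P := hTsub ht
        obtain ⟨K, hK, htK⟩ := htS
        obtain ⟨y, hy⟩ := Set.ncard_eq_one.1 (hTK K hK)
        have hty : t = y := by
          have : t ∈ T ∩ K := ⟨ht, htK⟩
          rw [hy] at this; exact this
        obtain ⟨b, hb⟩ := Set.ncard_eq_one.1 (h B hB K hK)
        have hbB : b ∈ B ∧ b ∈ K := by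
          have : b ∈ B ∩ K := by rw [hb]; rfl
          exact ⟨this.1, this.2⟩
        have hbT : b ∈ T ∩ K := ⟨hBT hbB.1, hbB.2⟩
        rw [hy] at hbT
        rw [hty, ← hbT]
        exact hbB.1
      have hTeq : T = B := le_antisymm hTB hBT
      rw [hTeq]; exact hB
  · intro h B hB K hK
    have hBm : B ∈ {B | M.IsBase B} := hB
    rw [h] at hBm
    exact hBm.2 K hK
end

section
/- Let M be a matroid on a finite ground set E, and let P and Q be two partitions of ⋃ B(M), the union of all bases of M, such that for every base B of M, every K ∈ P, and every L ∈ Q, one has |B ∩ K| = 1 and |B ∩ L| = 1. Then P = Q. -/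
open Set

variable {α : Type*}

lemma aux_key_s16 (M : Matroid α) (hE : M.E.Finite) {K L : Set α}
    (hK1 : ∀ B, M.IsBase B → (B ∩ K).ncard = 1)
    (hL1 : ∀ B, M.IsBase B → (B ∩ L).ncard = 1)
    {x y : α} (hxK : x ∈ K) (hxL : x ∈ L) (hyK : y ∈ K)
    (hy : y ∈ ⋃₀ {B | M.IsBase B}) (hx : x ∈ ⋃₀ {B | M.IsBase B}) : y ∈ L := by
  rcases eq_or_ne x y with rfl | hxy
  · exact hxL
  obtain ⟨B, hB, hyB⟩ := hy
  obtain ⟨B', hB', hxB'⟩ := hx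
  simp only [mem_setOf_eq] at hB hB'
  have hBfin : B.Finite := hE.subset hB.subset_ground
  have hxB : x ∉ B := by
    intro hxB
    have h2 : 1 < (B ∩ K).ncard := by
      rw [one_lt_ncard_iff (hBfin.subset inter_subset_left)]
      exact ⟨x, y, ⟨hxB, hxK⟩, ⟨hyB, hyK⟩, hxy⟩
    have := hK1 B hB
    omega
  have hxind : M.Indep {x} := (hB'.indep).subset (singleton_subset_iff.2 hxB')
  obtain ⟨B'', hB'', hxB'', hsub⟩ := hxind.exists_isBase_subset_union_isBase hB
  have hxB2 : x ∈ B'' := hxB'' rfl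
  have hB''fin : B''.Finite := hE.subset hB''.subset_ground
  have hyB'' : y ∉ B'' := by
    intro hyB''
    have h2 : 1 < (B'' ∩ K).ncard := by
      rw [one_lt_ncard_iff (hB''fin.subset inter_subset_left)]
      exact ⟨x, y, ⟨hxB2, hxK⟩, ⟨hyB'', hyK⟩, hxy⟩
    have := hK1 B'' hB''
    omega
  -- B \ B'' = {y}
  have hsub2 : B'' \ {x} ⊆ B := by
    intro a ⟨haB, hax⟩
    rcases hsub haB with h | h
    · exact absurd h hax
    · exact h
  have hcard : (B'' \ {x}).ncard = B.ncard - 1 := by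
    rw [ncard_diff (singleton_subset_iff.2 hxB2) (finite_singleton x), ncard_singleton,
      hB''.ncard_eq_ncard_of_isBase hB]
  have hdcard : (B \ (B'' \ {x})).ncard = 1 := by
    rw [ncard_diff hsub2 hB''fin.diff, hcard]
    have hpos : 0 < B.ncard := ncard_pos hBfin |>.2 ⟨y, hyB⟩
    omega
  obtain ⟨w, hw⟩ := ncard_eq_one.1 hdcard
  have hyw : y = w := by
    have : y ∈ B \ (B'' \ {x}) := ⟨hyB, fun h => hyB'' h.1⟩
    rw [hw] at this; exact this
  have hBdiff : B \ B'' ⊆ {y} := by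
    intro a ⟨haB, haB''⟩
    have : a ∈ B \ (B'' \ {x}) := ⟨haB, fun h => haB'' h.1⟩
    rw [hw] at this; rwa [hyw]
  obtain ⟨z, hz⟩ := ncard_eq_one.1 (hL1 B hB)
  have hzB : z ∈ B ∩ L := hz ▸ rfl
  rcases eq_or_ne z y with rfl | hzy
  · exact hzB.2
  have hzB'' : z ∈ B'' := by
    by_contra hzB''
    exact hzy (hBdiff ⟨hzB.1, hzB''⟩)
  have h2 : 1 < (B'' ∩ L).ncard := by
    rw [one_lt_ncard_iff (hB''fin.subset inter_subset_left)]
    exact ⟨x, z, ⟨hxB2, hxL⟩, ⟨hzB'', hzB.2⟩, fun h => hxB (h ▸ hzB.1)⟩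
  have := hL1 B'' hB''
  omega

theorem stmt_16 (M : Matroid α) (hE : M.E.Finite) (P Q : Set (Set α))
    (hP : IsPartitionOn P (⋃₀ {B | M.IsBase B}))
    (hQ : IsPartitionOn Q (⋃₀ {B | M.IsBase B}))
    (h : ∀ B, M.IsBase B → (∀ K ∈ P, (B ∩ K).ncard = 1) ∧ (∀ L ∈ Q, (B ∩ L).ncard = 1)) :
    P = Q := by
  obtain ⟨hPne, hPU, -⟩ := hP
  obtain ⟨hQne, hQU, -⟩ := hQ
  have key : ∀ K ∈ P, ∀ L ∈ Q, (∃ x, x ∈ K ∧ x ∈ L) → K = L := by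
    rintro K hK L hL ⟨x, hxK, hxL⟩
    have hxU : x ∈ ⋃₀ {B | M.IsBase B} := by rw [← hPU]; exact ⟨K, hK, hxK⟩
    ext y
    constructor
    · intro hyK
      have hyU : y ∈ ⋃₀ {B | M.IsBase B} := by rw [← hPU]; exact ⟨K, hK, hyK⟩
      exact aux_key_s16 M hE (fun B hB => (h B hB).1 K hK) (fun B hB => (h B hB).2 L hL)
        hxK hxL hyK hyU hxU
    · intro hyL
      have hyU : y ∈ ⋃₀ {B | M.IsBase B} := by rw [← hQU]; exact ⟨L, hL, hyL⟩
      exact aux_key_s16 M hE (fun B hB => (h B hB).2 L hL) (fun B hB => (h B hB).1 K hK)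
        hxL hxK hyL hyU hxU
  apply Set.eq_of_subset_of_subset
  · intro K hK
    obtain ⟨x, hx⟩ := nonempty_iff_ne_empty.2 (fun h0 => hPne (h0 ▸ hK))
    have hxQ : x ∈ ⋃₀ Q := by rw [hQU, ← hPU]; exact ⟨K, hK, hx⟩
    obtain ⟨L, hL, hxL⟩ := hxQ
    rw [key K hK L hL ⟨x, hx, hxL⟩]; exact hL
  · intro L hL
    obtain ⟨x, hx⟩ := nonempty_iff_ne_empty.2 (fun h0 => hQne (h0 ▸ hL))
    have hxP : x ∈ ⋃₀ P := by rw [hPU, ← hQU]; exact ⟨L, hL, hx⟩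
    obtain ⟨K, hK, hxK⟩ := hxP
    rw [← key K hK L hL ⟨x, hxK, hx⟩]; exact hK
end

section
/- Let M be a matroid on a finite ground set E with rank r(M) > 0. If M is a unique expansion matroid, then M is a union minimal matroid. -/
open Set

variable {α : Type*}

lemma base_ncard_eq_rank_aux (M : Matroid α) (hE : M.E.Finite) {B : Set α}
    (hB : M.IsBase B) : B.ncard = M.rank := by
  have hbdd : BddAbove {n | ∃ I, M.Indep I ∧ I ⊆ M.E ∧ I.ncard = n} := by
    refine ⟨M.E.ncard, ?_⟩
    rintro n ⟨I, _, hIE, rfl⟩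
    exact Set.ncard_le_ncard hIE hE
  have hmem : B.ncard ∈ {n | ∃ I, M.Indep I ∧ I ⊆ M.E ∧ I.ncard = n} :=
    ⟨B, hB.indep, hB.subset_ground, rfl⟩
  refine le_antisymm (le_csSup hbdd hmem) (csSup_le ⟨B.ncard, hmem⟩ ?_)
  rintro n ⟨I, hI, _, rfl⟩
  obtain ⟨B', hB', hIB'⟩ := hI.exists_isBase_superset
  calc I.ncard ≤ B'.ncard := Set.ncard_le_ncard hIB' (hE.subset hB'.subset_ground)
    _ = B.ncard := hB'.ncard_eq_ncard_of_isBase hB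

theorem stmt_17 (M : Matroid α) (hE : M.E.Finite) (hr : 0 < M.rank)
    (hM : M.UniqueExpansion) : M.UnionMinimal  := by
  intro M₁ hE1 hsub hun
  refine Set.Subset.antisymm hsub fun B hB => ?_
  simp only [Set.mem_setOf_eq] at hB ⊢
  have hfin : {B' | M₁.IsBase B'}.Finite :=
    hE.finite_subsets.subset (fun B' hB' => hE1 ▸ hB'.subset_ground)
  obtain ⟨B₁, hB₁, hmax⟩ := Set.exists_max_image {B' | M₁.IsBase B'}
    (fun B' => (B ∩ B').ncard) hfin M₁.exists_isBase
  simp only [Set.mem_setOf_eq] at hB₁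
  suffices h : B = B₁ by rwa [h]
  by_contra hne
  have hB₁M : M.IsBase B₁ := hsub hB₁
  have hB₁fin : B₁.Finite := hE.subset hB₁M.subset_ground
  obtain ⟨x, hxB, hxB₁⟩ : ∃ x, x ∈ B ∧ x ∉ B₁ := by
    by_contra h'
    push_neg at h'
    exact hne (hB.eq_of_subset_isBase hB₁M h')
  have hxU : x ∈ ⋃₀ {B' | M₁.IsBase B'} := by
    rw [hun]; exact ⟨B, hB, hxB⟩
  obtain ⟨B₂, hB₂, hxB₂⟩ := hxU
  simp only [Set.mem_setOf_eq] at hB₂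
  have hxi : M₁.Indep {x} := hB₂.indep.subset (Set.singleton_subset_iff.2 hxB₂)
  obtain ⟨B', hB', hxB', hB'sub⟩ := hxi.exists_isBase_subset_union_isBase hB₁
  have hxB'' : x ∈ B' := hxB' rfl
  have hdiff : B' \ B₁ = {x} := by
    apply Set.Subset.antisymm
    · rintro b ⟨hb1, hb2⟩
      rcases hB'sub hb1 with hb | hb
      · exact hb
      · exact absurd hb hb2
    · rintro b rfl
      exact ⟨hxB'', hxB₁⟩
  have hone : (B₁ \ B').encard = 1 := by
    rw [hB₁.encard_diff_comm hB', hdiff, Set.encard_singleton]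
  obtain ⟨y, hy⟩ := Set.encard_eq_one.mp hone
  have hymem : y ∈ B₁ \ B' := by rw [hy]; exact rfl
  have hyB₁ : y ∈ B₁ := hymem.1
  have hyB' : y ∉ B' := hymem.2
  have hB'eq : B' = insert x (B₁ \ {y}) := by
    apply Set.Subset.antisymm
    · intro b hb
      rcases hB'sub hb with hbx | hbB₁
      · exact Or.inl hbx
      · refine Or.inr ⟨hbB₁, fun hby => ?_⟩
        rw [Set.mem_singleton_iff] at hby
        exact hyB' (hby ▸ hb)
    · rintro b (rfl | ⟨hbB₁, hby⟩)
      · exact hxB''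
      · by_contra hbB'
        have : b ∈ B₁ \ B' := ⟨hbB₁, hbB'⟩
        rw [hy] at this
        exact hby this
  have hAsec : M.SecondaryBase (B₁ \ {y}) := by
    refine ⟨hB₁M.indep.subset Set.diff_subset, ?_⟩
    rw [Set.ncard_diff_singleton_of_mem hyB₁,
      base_ncard_eq_rank_aux M hE hB₁M]
  have hB'M : M.IsBase B' := hsub hB'
  have hAx : M.IsBase ((B₁ \ {y}) ∪ {x}) := by
    rw [Set.union_singleton, ← hB'eq]; exact hB'M
  by_cases hyB : y ∈ B
  · have hAy : M.IsBase ((B₁ \ {y}) ∪ {y}) := by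
      rw [Set.union_singleton, Set.insert_diff_singleton,
        Set.insert_eq_of_mem hyB₁]
      exact hB₁M
    have hxy := hM B hB (B₁ \ {y}) hAsec x hxB y hyB hAx hAy
    exact hxB₁ (hxy ▸ hyB₁)
  · have h1 : B ∩ B' = insert x (B ∩ B₁) := by
      rw [hB'eq]
      ext b
      simp only [Set.mem_inter_iff, Set.mem_insert_iff, Set.mem_diff,
        Set.mem_singleton_iff]
      constructor
      · rintro ⟨hbB, rfl | ⟨hb1, _⟩⟩
        · exact Or.inl rfl
        · exact Or.inr ⟨hbB, hb1⟩
      · rintro (rfl | ⟨hbB, hb1⟩)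
        · exact ⟨hxB, Or.inl rfl⟩
        · exact ⟨hbB, Or.inr ⟨hb1, fun h => hyB (h ▸ hbB)⟩⟩
    have hlt : (B ∩ B₁).ncard < (B ∩ B').ncard := by
      rw [h1, Set.ncard_insert_of_notMem (fun h => hxB₁ h.2)
        (hB₁fin.inter_of_right B)]
      omega
    exact absurd (hmax B' hB') (not_le.mpr hlt)
end

section
/- Let M be a matroid on a finite ground set E with rank r(M) > 0. If M is a unique expansion matroid, then the dual matroid M* is a unique exchange matroid. -/
open Set

variable {α : Type*}

lemma base_ncard_eq_rank (M : Matroid α) (hE : M.E.Finite) {C : Set α}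
    (hC : M.IsBase C) : C.ncard = M.rank := by
  have hCfin : C.Finite := hE.subset hC.subset_ground
  refine le_antisymm ?_ ?_
  · exact le_csSup ⟨C.ncard, fun n hn => by
      obtain ⟨I, hI, -, rfl⟩ := hn
      obtain ⟨B, hB, hIB⟩ := hI.exists_isBase_superset
      have hBfin : B.Finite := hE.subset hB.subset_ground
      calc I.ncard ≤ B.ncard := Set.ncard_le_ncard hIB hBfin
        _ = C.ncard := hB.ncard_eq_ncard_of_isBase hC⟩
      ⟨C, hC.indep, hC.subset_ground, rfl⟩
  · refine csSup_le ⟨C.ncard, C, hC.indep, hC.subset_ground, rfl⟩ ?_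
    rintro n ⟨I, hI, -, rfl⟩
    obtain ⟨B, hB, hIB⟩ := hI.exists_isBase_superset
    have hBfin : B.Finite := hE.subset hB.subset_ground
    calc I.ncard ≤ B.ncard := Set.ncard_le_ncard hIB hBfin
      _ = C.ncard := hB.ncard_eq_ncard_of_isBase hC

theorem stmt_19 (M : Matroid α) (hE : M.E.Finite) (hr : 0 < M.rank)
    (hM : M.UniqueExpansion) : M✶.UniqueExchange := by
  intro B1 B2 hB1 hB2 x hx y1 hy1 y2 hy2 hb1 hb2
  by_contra hne
  -- pass to the primal
  have hB1E : B1 ⊆ M.E := hB1.subset_ground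
  have hB2E : B2 ⊆ M.E := hB2.subset_ground
  set C : Set α := M.E \ B1 with hCdef
  have hC : M.IsBase C := (Matroid.dual_isBase_iff hB1E).mp hB1
  have hxE : x ∈ M.E := hB1E hx.1
  have hy1E : y1 ∈ M.E := hB2E hy1.1
  have hy2E : y2 ∈ M.E := hB2E hy2.1
  have hxC : x ∉ C := fun h => h.2 hx.1
  have hy1C : y1 ∈ C := ⟨hy1E, hy1.2⟩
  have hy2C : y2 ∈ C := ⟨hy2E, hy2.2⟩
  have hxy1 : x ≠ y1 := fun h => hy1.2 (h ▸ hx.1)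
  have hxy2 : x ≠ y2 := fun h => hy2.2 (h ▸ hx.1)
  have hcompl : ∀ y ∈ C, M.E \ ((B1 \ {x}) ∪ {y}) = (C \ {y}) ∪ {x} := by
    intro y hy
    have hyB1 : y ∉ B1 := hy.2
    ext a
    simp only [hCdef, Set.mem_diff, Set.mem_union, Set.mem_singleton_iff]
    constructor
    · rintro ⟨haE, ha⟩
      push_neg at ha
      by_cases hax : a = x
      · exact Or.inr hax
      · exact Or.inl ⟨⟨haE, fun h => hax (ha.1 h)⟩, ha.2⟩
    · rintro (⟨⟨haE, haB1⟩, hay⟩ | rfl)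
      · exact ⟨haE, by push_neg; exact ⟨fun h => absurd h haB1, hay⟩⟩
      · exact ⟨hxE, by push_neg; exact ⟨fun _ => rfl, fun h => hyB1 (h ▸ hx.1)⟩⟩
  have hsub1 : (B1 \ {x}) ∪ {y1} ⊆ M.E := Set.union_subset ((Set.diff_subset).trans hB1E) (Set.singleton_subset_iff.mpr hy1E)
  have hsub2 : (B1 \ {x}) ∪ {y2} ⊆ M.E := Set.union_subset ((Set.diff_subset).trans hB1E) (Set.singleton_subset_iff.mpr hy2E)
  have hD1 : M.IsBase ((C \ {y1}) ∪ {x}) := by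
    rw [← hcompl y1 hy1C]; exact (Matroid.dual_isBase_iff hsub1).mp hb1
  have hD2 : M.IsBase ((C \ {y2}) ∪ {x}) := by
    rw [← hcompl y2 hy2C]; exact (Matroid.dual_isBase_iff hsub2).mp hb2
  -- the secondary base
  set A : Set α := (C \ {y1, y2}) ∪ {x} with hAdef
  have hCfin : C.Finite := hE.subset hC.subset_ground
  have hAindep : M.Indep A := by
    refine hD1.indep.subset ?_
    rintro a (⟨haC, ha⟩ | rfl)
    · exact Or.inl ⟨haC, fun h => ha (Or.inl h)⟩
    · exact Or.inr rfl
  have hCcard : C.ncard = M.rank := base_ncard_eq_rank M hE hC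
  have hr2 : 2 ≤ M.rank := by
    rw [← hCcard]
    have : ({y1, y2} : Set α).ncard = 2 := Set.ncard_pair hne
    calc 2 = ({y1, y2} : Set α).ncard := this.symm
      _ ≤ C.ncard := Set.ncard_le_ncard (by rintro a (rfl | rfl); exacts [hy1C, hy2C]) hCfin
  have hAcard : A.ncard = M.rank - 1 := by
    have hxnot : x ∉ C \ {y1, y2} := fun h => hxC h.1
    rw [hAdef, Set.union_singleton, Set.ncard_insert_of_notMem hxnot hCfin.diff,
      Set.ncard_diff (by rintro a (rfl | rfl); exacts [hy1C, hy2C]) ((Set.finite_singleton y2).insert y1), Set.ncard_pair hne, hCcard]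
    omega
  have hAsec : M.SecondaryBase A := ⟨hAindep, hAcard⟩
  have hAy1 : A ∪ {y1} = (C \ {y2}) ∪ {x} := by
    ext a
    simp only [hAdef, Set.mem_union, Set.mem_diff, Set.mem_singleton_iff, Set.mem_insert_iff]
    constructor
    · rintro ((⟨haC, ha⟩ | rfl) | rfl)
      · exact Or.inl ⟨haC, fun h => ha (Or.inr h)⟩
      · exact Or.inr rfl
      · exact Or.inl ⟨hy1C, hne⟩
    · rintro (⟨haC, ha⟩ | rfl)
      · by_cases h1 : a = y1
        · exact Or.inr h1
        · exact Or.inl (Or.inl ⟨haC, by push_neg; exact ⟨h1, ha⟩⟩)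
      · exact Or.inl (Or.inr rfl)
  have hAy2 : A ∪ {y2} = (C \ {y1}) ∪ {x} := by
    ext a
    simp only [hAdef, Set.mem_union, Set.mem_diff, Set.mem_singleton_iff, Set.mem_insert_iff]
    constructor
    · rintro ((⟨haC, ha⟩ | rfl) | rfl)
      · exact Or.inl ⟨haC, fun h => ha (Or.inl h)⟩
      · exact Or.inr rfl
      · exact Or.inl ⟨hy2C, Ne.symm hne⟩
    · rintro (⟨haC, ha⟩ | rfl)
      · by_cases h1 : a = y2
        · exact Or.inr h1
        · exact Or.inl (Or.inl ⟨haC, by push_neg; exact ⟨ha, h1⟩⟩)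
      · exact Or.inl (Or.inr rfl)
  exact hne (hM C hC A hAsec y1 hy1C y2 hy2C (hAy1 ▸ hD2) (hAy2 ▸ hD1))
end
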